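/- arXiv:1401.3677 — 6 statements merged into one kernel-verified Lean document; each statement's English description precedes it below -/
import Mathlib

section
/- Let λ_p > 0 and δ > 0. Define V_δ(u) = 2πδ² − 2δ² arccos(u/(2δ)) + u√(δ² − u²/4) for 0 ≤ u ≤ 2δ and V_δ(u) = 2πδ² for u > 2δ; let k_I(u) = 0 for u < δ and k_I(u) = e^{−λ_p V_δ(u)} for u ≥ δ; let λ_I = λ_p e^{−λ_p π δ²}; let K_I(r) = 2π(λ_p/λ_I)² ∫₀ʳ u k_I(u) du, and let K_G(r) = π r² − (1/λ_I)(1 − e^{−π λ_I r²}) be the K function of the Ginibre point process of intensity λ_I. Then the limit lim_{r→∞} (K_G(r) − K_I(r)) exists and satisfies lim_{r→∞} (K_G(r) − K_I(r)) ≤ (π λ_p δ² − e^{π λ_p δ²})/λ_p < 0. -/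
open Real Filter Topology Set MeasureTheory

/-- Area of the union of two disks of radius `δ` whose centers are at distance `u`. -/
noncomputable def unionArea (δ u : ℝ) : ℝ :=
  if u ≤ 2 * δ then
    2 * π * δ ^ 2 - 2 * δ ^ 2 * Real.arccos (u / (2 * δ)) + u * Real.sqrt (δ ^ 2 - u ^ 2 / 4)
  else 2 * π * δ ^ 2

/-- Two-point retention probability of the Matérn type I hard-core process. -/
noncomputable def kTypeI (lp δ u : ℝ) : ℝ :=
  if u < δ then 0 else Real.exp (-lp * unionArea δ u)

/-- Ripley K function of the Matérn type I hard-core process. -/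
noncomputable def KTypeI (lp δ r : ℝ) : ℝ :=
  2 * π * (lp / (lp * Real.exp (-lp * π * δ ^ 2))) ^ 2 * ∫ u in (0 : ℝ)..r, u * kTypeI lp δ u

/-- Ripley K function of the Ginibre point process of intensity `lam`. -/
noncomputable def KGinibre (lam r : ℝ) : ℝ :=
  π * r ^ 2 - (1 / lam) * (1 - Real.exp (-π * lam * r ^ 2))

private lemma xsqrt_le_arccos {x : ℝ} (hx0 : 0 ≤ x) (hx1 : x ≤ 1) :
    x * Real.sqrt (1 - x ^ 2) ≤ Real.arccos x := by
  have hs : Real.sin (Real.arccos x) = Real.sqrt (1 - x ^ 2) := Real.sin_arccos x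
  have hc : Real.cos (Real.arccos x) = x := Real.cos_arccos (by linarith) hx1
  have h0 : 0 ≤ Real.arccos x := Real.arccos_nonneg x
  have h2 : Real.sin (2 * Real.arccos x) ≤ 2 * Real.arccos x := Real.sin_le (by linarith)
  rw [Real.sin_two_mul, hs, hc] at h2
  linarith

private lemma unionArea_of_ge {δ u : ℝ} (hδ : 0 < δ) (hu : 2 * δ ≤ u) :
    unionArea δ u = 2 * π * δ ^ 2 := by
  unfold unionArea
  rcases eq_or_lt_of_le hu with h | h
  · rw [if_pos h.ge, ← h, div_self (by positivity), Real.arccos_one,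
      show δ ^ 2 - (2 * δ) ^ 2 / 4 = 0 by ring, Real.sqrt_zero]
    ring
  · rw [if_neg (not_le.mpr h)]

private lemma unionArea_le {δ : ℝ} (hδ : 0 < δ) {u : ℝ} (hu0 : 0 ≤ u) :
    unionArea δ u ≤ 2 * π * δ ^ 2 := by
  unfold unionArea
  split_ifs with h
  · set x := u / (2 * δ) with hx
    have hx0 : 0 ≤ x := by positivity
    have hx1 : x ≤ 1 := by rw [hx, div_le_one (by positivity)]; linarith
    have key := xsqrt_le_arccos hx0 hx1
    have hu' : u = 2 * δ * x := by rw [hx]; field_simp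
    have hsq : δ ^ 2 - u ^ 2 / 4 = δ ^ 2 * (1 - x ^ 2) := by rw [hu']; ring
    have hsqrt : Real.sqrt (δ ^ 2 - u ^ 2 / 4) = δ * Real.sqrt (1 - x ^ 2) := by
      rw [hsq, Real.sqrt_mul (sq_nonneg δ), Real.sqrt_sq hδ.le]
    rw [hsqrt, hu']
    have hmul := mul_le_mul_of_nonneg_left key (by positivity : (0:ℝ) ≤ 2 * δ ^ 2)
    nlinarith [hmul]
  · exact le_rfl

private lemma kTypeI_nonneg (lp δ u : ℝ) : 0 ≤ kTypeI lp δ u := by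
  unfold kTypeI
  split_ifs
  · exact le_rfl
  · exact (Real.exp_pos _).le

private lemma kTypeI_of_ge {lp δ u : ℝ} (hδ : 0 < δ) (hu : 2 * δ ≤ u) :
    kTypeI lp δ u = Real.exp (-lp * (2 * π * δ ^ 2)) := by
  unfold kTypeI
  rw [if_neg (not_lt.mpr (by linarith)), unionArea_of_ge hδ hu]

private lemma kTypeI_ge {lp δ u : ℝ} (hlp : 0 < lp) (hδ : 0 < δ) (hu : δ ≤ u) :
    Real.exp (-lp * (2 * π * δ ^ 2)) ≤ kTypeI lp δ u := by
  unfold kTypeI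
  rw [if_neg (not_lt.mpr hu)]
  apply Real.exp_le_exp.mpr
  have hua := unionArea_le hδ (le_trans hδ.le hu)
  nlinarith [hua, hlp.le]

/-- `lim_{r→∞} (K_G(r) − K_I(r))` exists and is at most
`(π λ_p δ² − e^{π λ_p δ²})/λ_p < 0`, where `K_G` is the K function of the Ginibre process with
intensity matched to the Matérn type I process of hard-core distance `δ` and parent intensity
`λ_p`. -/
theorem ginibre_more_regular_than_mhcp_typeI (lp δ : ℝ) (hlp : 0 < lp) (hδ : 0 < δ) :
    ∃ L : ℝ,
      Tendsto (fun r : ℝ => KGinibre (lp * Real.exp (-lp * π * δ ^ 2)) r - KTypeI lp δ r)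
        atTop (𝓝 L) ∧
      L ≤ (π * lp * δ ^ 2 - Real.exp (π * lp * δ ^ 2)) / lp ∧
      (π * lp * δ ^ 2 - Real.exp (π * lp * δ ^ 2)) / lp < 0 := by
  have hpi := Real.pi_pos
  have hδ2 : δ ≤ 2 * δ := by linarith
  -- the conversion constant
  have hcc : (lp / (lp * Real.exp (-lp * π * δ ^ 2))) ^ 2 = Real.exp (lp * (2 * π * δ ^ 2)) := by
    have h1 : lp / (lp * Real.exp (-lp * π * δ ^ 2)) = Real.exp (lp * π * δ ^ 2) := by
      rw [show -lp * π * δ ^ 2 = -(lp * π * δ ^ 2) by ring, Real.exp_neg]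
      field_simp
    rw [h1, sq, ← Real.exp_add]
    congr 1
    ring
  have hce : Real.exp (lp * (2 * π * δ ^ 2)) * Real.exp (-lp * (2 * π * δ ^ 2)) = 1 := by
    rw [← Real.exp_add, show lp * (2 * π * δ ^ 2) + -lp * (2 * π * δ ^ 2) = 0 by ring,
      Real.exp_zero]
  -- integrability on [0, δ]
  have hI1 : IntervalIntegrable (fun u => u * kTypeI lp δ u) volume 0 δ := by
    rw [intervalIntegrable_iff_integrableOn_Ioc_of_le hδ.le]
    have hz : (fun u => u * kTypeI lp δ u) =ᵐ[volume.restrict (Ioc (0:ℝ) δ)] 0 := by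
      refine (MeasureTheory.ae_restrict_iff' measurableSet_Ioc).mpr ?_
      rw [MeasureTheory.ae_iff]
      refine measure_mono_null ?_ (volume_singleton (a := δ))
      intro x hx
      simp only [mem_setOf_eq] at hx
      push_neg at hx
      obtain ⟨hx1, hx2⟩ := hx
      by_contra hne
      apply hx2
      have hxlt : x < δ := lt_of_le_of_ne hx1.2 (by simpa using hne)
      simp [kTypeI, if_pos hxlt]
    exact (integrable_zero _ _ _).congr hz.symm
  -- continuity / integrability on [δ, 2δ]
  have hcontF : Continuous (fun u : ℝ => u * Real.exp (-lp *
      (2 * π * δ ^ 2 - 2 * δ ^ 2 * Real.arccos (u / (2 * δ)) +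
        u * Real.sqrt (δ ^ 2 - u ^ 2 / 4)))) := by
    apply continuous_id'.mul
    apply Real.continuous_exp.comp
    apply continuous_const.mul
    refine (Continuous.add (Continuous.sub continuous_const ?_) ?_)
    · exact continuous_const.mul (Real.continuous_arccos.comp (continuous_id'.div_const _))
    · exact continuous_id'.mul (Real.continuous_sqrt.comp (by fun_prop))
  have hEq2 : EqOn (fun u : ℝ => u * kTypeI lp δ u) (fun u : ℝ => u * Real.exp (-lp *
      (2 * π * δ ^ 2 - 2 * δ ^ 2 * Real.arccos (u / (2 * δ)) +
        u * Real.sqrt (δ ^ 2 - u ^ 2 / 4)))) (Icc δ (2 * δ)) := by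
    intro u hu
    simp only [kTypeI, unionArea, if_neg (not_lt.mpr hu.1), if_pos hu.2]
  have hI2 : IntervalIntegrable (fun u => u * kTypeI lp δ u) volume δ (2 * δ) := by
    apply ContinuousOn.intervalIntegrable
    rw [uIcc_of_le hδ2]
    exact hcontF.continuousOn.congr hEq2
  -- integrability and value on [2δ, r]
  have hI3 : ∀ r : ℝ, 2 * δ ≤ r →
      IntervalIntegrable (fun u => u * kTypeI lp δ u) volume (2 * δ) r := by
    intro r hr
    apply ContinuousOn.intervalIntegrable
    rw [uIcc_of_le hr]
    apply ((continuous_id'.mul continuous_const).continuousOn).congr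
    intro u hu
    show u * kTypeI lp δ u = u * Real.exp (-lp * (2 * π * δ ^ 2))
    rw [kTypeI_of_ge hδ hu.1]
  have hval3 : ∀ r : ℝ, 2 * δ ≤ r → (∫ u in (2*δ)..r, u * kTypeI lp δ u)
      = Real.exp (-lp * (2 * π * δ ^ 2)) * (r ^ 2 / 2 - (2 * δ) ^ 2 / 2) := by
    intro r hr
    rw [intervalIntegral.integral_congr
      (g := fun u => u * Real.exp (-lp * (2 * π * δ ^ 2))) ?_]
    · rw [intervalIntegral.integral_mul_const, integral_id]
      ring
    · rw [uIcc_of_le hr]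
      intro u hu
      show u * kTypeI lp δ u = u * Real.exp (-lp * (2 * π * δ ^ 2))
      rw [kTypeI_of_ge hδ hu.1]
  set A := ∫ u in (0:ℝ)..(2*δ), u * kTypeI lp δ u with hA_def
  -- K_I for large r
  have hKI : ∀ r : ℝ, 2 * δ ≤ r → KTypeI lp δ r =
      2 * π * Real.exp (lp * (2 * π * δ ^ 2)) * A + π * r ^ 2 - 4 * π * δ ^ 2 := by
    intro r hr
    unfold KTypeI
    rw [hcc, ← intervalIntegral.integral_add_adjacent_intervals (hI1.trans hI2) (hI3 r hr),
      ← hA_def, hval3 r hr]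
    linear_combination (π * r ^ 2 - 4 * π * δ ^ 2) * hce
  have hinv : 1 / (lp * Real.exp (-lp * π * δ ^ 2)) = Real.exp (lp * π * δ ^ 2) / lp := by
    rw [show -lp * π * δ ^ 2 = -(lp * π * δ ^ 2) by ring, Real.exp_neg]
    field_simp
  -- lower bound on A
  have hA_ge : 3 / 2 * δ ^ 2 * Real.exp (-lp * (2 * π * δ ^ 2)) ≤ A := by
    rw [hA_def, ← intervalIntegral.integral_add_adjacent_intervals hI1 hI2]
    have h01 : 0 ≤ ∫ u in (0:ℝ)..δ, u * kTypeI lp δ u := by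
      apply intervalIntegral.integral_nonneg hδ.le
      intro u hu
      exact mul_nonneg hu.1 (kTypeI_nonneg lp δ u)
    have hI2' : IntervalIntegrable (fun u : ℝ => u * Real.exp (-lp * (2 * π * δ ^ 2)))
        volume δ (2 * δ) := (continuous_id'.mul continuous_const).intervalIntegrable _ _
    have hmono : (∫ u in δ..(2*δ), u * Real.exp (-lp * (2 * π * δ ^ 2)))
        ≤ ∫ u in δ..(2*δ), u * kTypeI lp δ u := by
      apply intervalIntegral.integral_mono_on hδ2 hI2' hI2
      intro u hu
      exact mul_le_mul_of_nonneg_left (kTypeI_ge hlp hδ hu.1) (le_trans hδ.le hu.1)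
    have hval : (∫ u in δ..(2*δ), u * Real.exp (-lp * (2 * π * δ ^ 2)))
        = 3 / 2 * δ ^ 2 * Real.exp (-lp * (2 * π * δ ^ 2)) := by
      rw [intervalIntegral.integral_mul_const, integral_id]
      ring
    linarith
  refine ⟨-(Real.exp (lp * π * δ ^ 2) / lp) + (4 * π * δ ^ 2 -
    2 * π * Real.exp (lp * (2 * π * δ ^ 2)) * A), ?_, ?_, ?_⟩
  · -- the limit
    have htend0 : Tendsto
        (fun r : ℝ => Real.exp (-π * (lp * Real.exp (-lp * π * δ ^ 2)) * r ^ 2)) atTop (𝓝 0) := by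
      apply Real.tendsto_exp_atBot.comp
      exact (tendsto_pow_atTop two_ne_zero).const_mul_atTop_of_neg
        (by nlinarith [mul_pos (mul_pos hpi hlp) (Real.exp_pos (-lp * π * δ ^ 2))])
    have h := ((htend0.const_sub 1).const_mul
        (-(1 / (lp * Real.exp (-lp * π * δ ^ 2))))).add_const
      (4 * π * δ ^ 2 - 2 * π * Real.exp (lp * (2 * π * δ ^ 2)) * A)
    have h2 : -(1 / (lp * Real.exp (-lp * π * δ ^ 2))) * (1 - 0) +
        (4 * π * δ ^ 2 - 2 * π * Real.exp (lp * (2 * π * δ ^ 2)) * A)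
        = -(Real.exp (lp * π * δ ^ 2) / lp) + (4 * π * δ ^ 2 -
          2 * π * Real.exp (lp * (2 * π * δ ^ 2)) * A) := by
      rw [hinv]; ring
    rw [h2] at h
    apply Tendsto.congr' ?_ h
    have hev : ∀ᶠ r : ℝ in atTop, 2 * δ ≤ r := eventually_ge_atTop (2 * δ)
    filter_upwards [hev] with r hr
    rw [hKI r hr]
    unfold KGinibre
    ring
  · -- the bound
    have hkey : 3 * π * δ ^ 2 ≤ 2 * π * Real.exp (lp * (2 * π * δ ^ 2)) * A := by
      have h1 := mul_le_mul_of_nonneg_left hA_ge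
        (by positivity : (0:ℝ) ≤ 2 * π * Real.exp (lp * (2 * π * δ ^ 2)))
      have h2 : 2 * π * Real.exp (lp * (2 * π * δ ^ 2)) *
          (3 / 2 * δ ^ 2 * Real.exp (-lp * (2 * π * δ ^ 2))) = 3 * π * δ ^ 2 := by
        linear_combination (3 * π * δ ^ 2) * hce
      linarith
    have hrhs : (π * lp * δ ^ 2 - Real.exp (π * lp * δ ^ 2)) / lp
        = π * δ ^ 2 - Real.exp (lp * π * δ ^ 2) / lp := by
      rw [show π * lp * δ ^ 2 = lp * π * δ ^ 2 by ring]
      field_simp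
    rw [hrhs]
    linarith
  · -- negativity
    apply div_neg_of_neg_of_pos ?_ hlp
    have := Real.add_one_le_exp (π * lp * δ ^ 2)
    linarith
end

section
/- Let λ_p > 0 and δ > 0. Define V_δ(u) as the area of the union of two δ-disks at center distance u (V_δ(u) = 2πδ² − 2δ² arccos(u/(2δ)) + u√(δ² − u²/4) for 0 ≤ u ≤ 2δ, V_δ(u) = 2πδ² for u > 2δ); let λ_II = (1 − e^{−λ_p π δ²})/(πδ²); let k_II(u) = 0 for u < δ, k_II(u) = [2V_δ(u)(1 − e^{−λ_p π δ²}) − 2πδ²(1 − e^{−λ_p V_δ(u)})]/(λ_p² π δ² V_δ(u)(V_δ(u) − πδ²)) for δ ≤ u ≤ 2δ, and k_II(u) = λ_II²/λ_p² for u > 2δ; let K_II(r) = 2π(λ_p/λ_II)² ∫₀ʳ k_II(u) u du, and let K_G(r) = π r² − (1/λ_II)(1 − e^{−π λ_II r²}). Assume that λ_p² k_II(u) ≥ λ_II² for all u ∈ [δ, 2δ]. Then lim_{r→∞} (K_G(r) − K_II(r)) exists and satisfies lim_{r→∞} (K_G(r) − K_II(r)) ≤ −πδ² e^{−π λ_p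 δ²}/(1 − e^{−π λ_p δ²}) < 0. -/
open Real Filter Topology Set MeasureTheory

/-- Intensity of the Matérn type II hard-core process. -/
noncomputable def lamTypeII (lp δ : ℝ) : ℝ :=
  (1 - Real.exp (-lp * π * δ ^ 2)) / (π * δ ^ 2)

/-- Two-point retention probability of the Matérn type II hard-core process. -/
noncomputable def kTypeII (lp δ u : ℝ) : ℝ :=
  if u < δ then 0
  else if u ≤ 2 * δ then
    (2 * unionArea δ u * (1 - Real.exp (-lp * π * δ ^ 2))
        - 2 * π * δ ^ 2 * (1 - Real.exp (-lp * unionArea δ u)))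
      / (lp ^ 2 * π * δ ^ 2 * unionArea δ u * (unionArea δ u - π * δ ^ 2))
  else (lamTypeII lp δ) ^ 2 / lp ^ 2

/-- Ripley K function of the Matérn type II hard-core process. -/
noncomputable def KTypeII (lp δ r : ℝ) : ℝ :=
  2 * π * (lp / lamTypeII lp δ) ^ 2 * ∫ u in (0 : ℝ)..r, kTypeII lp δ u * u

lemma unionArea_measurable (δ : ℝ) : Measurable (unionArea δ) := by
  unfold unionArea
  refine Measurable.ite (measurableSet_le measurable_id measurable_const) ?_ measurable_const
  have h1 : Continuous Real.arccos := Real.continuous_arccos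
  have : Continuous fun u : ℝ => 2 * π * δ ^ 2 - 2 * δ ^ 2 * Real.arccos (u / (2 * δ)) +
      u * Real.sqrt (δ ^ 2 - u ^ 2 / 4) := by fun_prop
  exact this.measurable

lemma kTypeII_measurable (lp δ : ℝ) : Measurable (kTypeII lp δ) := by
  unfold kTypeII
  have hV := unionArea_measurable δ
  refine Measurable.ite (measurableSet_lt measurable_id measurable_const) measurable_const ?_
  refine Measurable.ite (measurableSet_le measurable_id measurable_const) ?_ measurable_const
  exact (((hV.const_mul 2).mul measurable_const).sub
    (measurable_const.mul ((measurable_const.sub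
      (Real.measurable_exp.comp (hV.const_mul (-lp))))))).div
    (((measurable_const.mul hV)).mul (hV.sub measurable_const))

lemma arccos_antitone' : Antitone Real.arccos :=
  fun _ _ h => sub_le_sub_left (Real.monotone_arcsin h) _

lemma arccos_half' : Real.arccos (1/2) = π/3 := by
  rw [← Real.cos_pi_div_three, Real.arccos_cos (by positivity) (by linarith [pi_pos])]

lemma unionArea_lb {δ u : ℝ} (hδ : 0 < δ) (h1 : δ ≤ u) (h2 : u ≤ 2*δ) :
    4*π/3*δ^2 ≤ unionArea δ u := by
  rw [unionArea, if_pos (by linarith)]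
  have h3 : (1:ℝ)/2 ≤ u/(2*δ) := by rw [le_div_iff₀ (by positivity)]; linarith
  have h4 := arccos_antitone' h3
  rw [arccos_half'] at h4
  have h5 : 2 * δ^2 * Real.arccos (u / (2*δ)) ≤ 2 * δ^2 * (π/3) :=
    mul_le_mul_of_nonneg_left h4 (by positivity)
  have h6 : 0 ≤ u * Real.sqrt (δ^2 - u^2/4) := mul_nonneg (by linarith) (Real.sqrt_nonneg _)
  nlinarith

lemma unionArea_ub {δ u : ℝ} (hδ : 0 < δ) (h1 : 0 ≤ u) (h2 : u ≤ 2*δ) :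
    unionArea δ u ≤ 2*π*δ^2 + 2*δ^2 := by
  rw [unionArea, if_pos (by linarith)]
  have h4 := Real.arccos_nonneg (u / (2*δ))
  have h5 : Real.sqrt (δ^2 - u^2/4) ≤ δ := by
    have h5a := Real.sqrt_le_sqrt (show δ^2 - u^2/4 ≤ δ^2 by nlinarith)
    rwa [Real.sqrt_sq hδ.le] at h5a
  have h6 : u * Real.sqrt (δ^2 - u^2/4) ≤ 2*δ*δ :=
    mul_le_mul h2 h5 (Real.sqrt_nonneg _) (by positivity)
  nlinarith

lemma kTypeII_bound {lp δ : ℝ} (hlp : 0 < lp) (hδ : 0 < δ) :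
    ∃ M : ℝ, 0 ≤ M ∧ ∀ u, |kTypeII lp δ u| ≤ M := by
  set D₀ : ℝ := lp^2*π*δ^2*(4*π/3*δ^2)*(π/3*δ^2) with hD₀
  have hD₀pos : 0 < D₀ := by positivity
  set Nm : ℝ := 2*(2*π*δ^2+2*δ^2) + 2*π*δ^2 with hNm
  have hNmpos : 0 < Nm := by positivity
  refine ⟨max (Nm / D₀) ((lamTypeII lp δ)^2 / lp^2), le_trans (by positivity)
    (le_max_left _ _), fun u => ?_⟩
  rw [kTypeII]
  split_ifs with h1 h2
  · simpa using le_trans (by positivity) (le_max_left (Nm / D₀) _)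
  · push_neg at h1
    refine le_trans ?_ (le_max_left _ _)
    set V := unionArea δ u with hV
    have hVlb : 4*π/3*δ^2 ≤ V := unionArea_lb hδ h1 h2
    have hVub : V ≤ 2*π*δ^2 + 2*δ^2 := unionArea_ub hδ (by linarith) h2
    have hVpos : 0 < V := lt_of_lt_of_le (by positivity) hVlb
    have hD : D₀ ≤ lp^2*π*δ^2 * V * (V - π*δ^2) := by
      rw [hD₀]
      have hx : π/3*δ^2 ≤ V - π*δ^2 := by nlinarith [pi_pos]
      have := mul_le_mul (mul_le_mul_of_nonneg_left hVlb (by positivity : (0:ℝ) ≤ lp^2*π*δ^2))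
        hx (by positivity) (by positivity)
      linarith
    have hDpos : 0 < lp^2*π*δ^2 * V * (V - π*δ^2) := lt_of_lt_of_le hD₀pos hD
    have hE1 : Real.exp (-lp * π * δ^2) ≤ 1 := by
      rw [Real.exp_le_one_iff]
      nlinarith [mul_pos (mul_pos hlp pi_pos) (pow_pos hδ 2)]
    have hE2 : 0 < Real.exp (-lp * π * δ^2) := Real.exp_pos _
    have hE3 : Real.exp (-lp * V) ≤ 1 := by
      rw [Real.exp_le_one_iff]
      nlinarith [mul_pos hlp hVpos]
    have hE4 : 0 < Real.exp (-lp * V) := Real.exp_pos _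
    have hN : |2 * V * (1 - Real.exp (-lp * π * δ^2))
        - 2 * π * δ^2 * (1 - Real.exp (-lp * V))| ≤ Nm := by
      have ha1 : 0 ≤ 1 - Real.exp (-lp*π*δ^2) := by linarith
      have ha2 : 1 - Real.exp (-lp*π*δ^2) ≤ 1 := by linarith
      have hb1 : 0 ≤ 1 - Real.exp (-lp*V) := by linarith
      have hb2 : 1 - Real.exp (-lp*V) ≤ 1 := by linarith
      rw [abs_le]
      constructor <;>
        nlinarith [mul_nonneg hVpos.le ha1,
          mul_le_mul_of_nonneg_left ha2 (by linarith : (0:ℝ) ≤ 2*V),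
          mul_nonneg (by positivity : (0:ℝ) ≤ 2*π*δ^2) hb1,
          mul_le_mul_of_nonneg_left hb2 (by positivity : (0:ℝ) ≤ 2*π*δ^2), pi_pos]
    rw [abs_div, abs_of_pos hDpos]
    exact div_le_div₀ hNmpos.le hN hD₀pos hD
  · exact le_trans (le_of_eq (abs_of_nonneg (by positivity))) (le_max_right _ _)

/-- Assuming `λ_p² k_II(u) ≥ λ_II²` on `[δ, 2δ]`, the limit `lim_{r→∞} (K_G(r) − K_II(r))`
exists and is at most `−πδ² e^{−πλ_pδ²}/(1 − e^{−πλ_pδ²}) < 0`, where `K_G` is the K function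
of the Ginibre process with intensity matched to the Matérn type II process. -/
theorem ginibre_more_regular_than_mhcp_typeII (lp δ : ℝ) (hlp : 0 < lp) (hδ : 0 < δ)
    (hk : ∀ u ∈ Icc δ (2 * δ), (lamTypeII lp δ) ^ 2 ≤ lp ^ 2 * kTypeII lp δ u) :
    ∃ L : ℝ,
      Tendsto (fun r : ℝ => KGinibre (lamTypeII lp δ) r - KTypeII lp δ r) atTop (𝓝 L) ∧
      L ≤ -(π * δ ^ 2) * Real.exp (-π * lp * δ ^ 2) / (1 - Real.exp (-π * lp * δ ^ 2)) ∧
      -(π * δ ^ 2) * Real.exp (-π * lp * δ ^ 2) / (1 - Real.exp (-π * lp * δ ^ 2)) < 0 := by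
  have hπ := pi_pos
  set E : ℝ := Real.exp (-lp * π * δ ^ 2) with hE
  have hEarg : -π * lp * δ ^ 2 = -lp * π * δ ^ 2 := by ring
  have hE1 : E < 1 := by
    rw [hE, Real.exp_lt_one_iff]
    nlinarith [mul_pos (mul_pos hlp hπ) (pow_pos hδ 2)]
  have hEpos : 0 < E := Real.exp_pos _
  set lam : ℝ := lamTypeII lp δ with hlamdef
  have hlam : 0 < lam := by
    rw [hlamdef, lamTypeII]
    exact div_pos (by linarith) (by positivity)
  -- the integrand and its integrability
  set f : ℝ → ℝ := fun u => kTypeII lp δ u * u with hf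
  obtain ⟨M, hM0, hM⟩ := kTypeII_bound hlp hδ
  have hmeas : Measurable f := (kTypeII_measurable lp δ).mul measurable_id
  have hInt : ∀ a b : ℝ, IntervalIntegrable f volume a b := by
    intro a b
    have hg : IntervalIntegrable (fun u : ℝ => M * |u|) volume a b :=
      (continuous_const.mul continuous_abs).intervalIntegrable a b
    refine hg.mono_fun hmeas.aestronglyMeasurable (ae_of_all _ fun u => ?_)
    simp only [hf, Real.norm_eq_abs, abs_mul, abs_abs, abs_of_nonneg hM0]
    exact mul_le_mul_of_nonneg_right (hM u) (abs_nonneg u)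
  set I2 : ℝ := ∫ u in (0:ℝ)..(2*δ), f u with hI2
  set C : ℝ := 2 * π * (lp / lam) ^ 2 * I2 with hC
  set L : ℝ := 4*π*δ^2 - 1/lam - C with hL
  have hfrag : (lp / lam) ^ 2 * (lam ^ 2 / lp ^ 2) = 1 := by
    field_simp
  -- value of KTypeII for r ≥ 2δ
  have hKII : ∀ r : ℝ, 2*δ ≤ r → KTypeII lp δ r = C + π * (r^2 - (2*δ)^2) := by
    intro r hr
    have hsplit : (∫ u in (0:ℝ)..r, f u) = I2 + ∫ u in (2*δ:ℝ)..r, f u :=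
      (intervalIntegral.integral_add_adjacent_intervals (hInt 0 (2*δ)) (hInt (2*δ) r)).symm
    have htail : (∫ u in (2*δ:ℝ)..r, f u) = lam^2/lp^2 * ((r^2 - (2*δ)^2)/2) := by
      have hcongr : (∫ u in (2*δ:ℝ)..r, f u) = ∫ u in (2*δ:ℝ)..r, lam^2/lp^2 * u := by
        refine intervalIntegral.integral_congr_ae (ae_of_all _ fun x hx => ?_)
        rw [uIoc_of_le hr] at hx
        have hx1 : 2*δ < x := hx.1
        rw [hf]
        simp only
        rw [kTypeII, if_neg (by push_neg; linarith), if_neg (by push_neg; linarith), hlamdef]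
      rw [hcongr, intervalIntegral.integral_const_mul, integral_id]
    rw [KTypeII, hsplit, htail, ← hlamdef]
    have h7 : 2 * π * (lp / lam) ^ 2 * (I2 + lam ^ 2 / lp ^ 2 * ((r ^ 2 - (2 * δ) ^ 2) / 2)) =
        2 * π * (lp / lam) ^ 2 * I2 +
          ((lp / lam) ^ 2 * (lam ^ 2 / lp ^ 2)) * (π * (r ^ 2 - (2 * δ) ^ 2)) := by ring
    rw [h7, hfrag, one_mul, ← hC]
  -- the limit
  have hTend : Tendsto (fun r : ℝ => KGinibre lam r - KTypeII lp δ r) atTop (𝓝 L) := by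
    have h1 : Tendsto (fun r : ℝ => π * lam * r ^ 2) atTop atTop :=
      (tendsto_pow_atTop two_ne_zero).const_mul_atTop (by positivity)
    have h2 : Tendsto (fun r : ℝ => -π * lam * r ^ 2) atTop atBot := by
      refine tendsto_neg_atTop_atBot.comp h1 |>.congr fun r => by
        simp only [Function.comp_apply]; ring
    have h3 : Tendsto (fun r : ℝ => Real.exp (-π * lam * r ^ 2)) atTop (𝓝 0) :=
      Real.tendsto_exp_atBot.comp h2
    have h4 : Tendsto (fun r : ℝ => 1/lam * Real.exp (-π * lam * r ^ 2) + L) atTop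
        (𝓝 (1/lam * 0 + L)) := ((h3.const_mul (1/lam)).add tendsto_const_nhds)
    rw [mul_zero, zero_add] at h4
    refine h4.congr' ?_
    filter_upwards [eventually_ge_atTop (2*δ)] with r hr
    rw [KGinibre, hKII r hr, hL]
    ring
  refine ⟨L, hTend, ?_, ?_⟩
  · -- L ≤ bound
    have hlow : (lam/lp)^2 * (3*δ^2/2) ≤ I2 := by
      have hzero : (∫ u in (0:ℝ)..δ, f u) = 0 := by
        have hne : ∀ᵐ x : ℝ, x ≠ δ := by
          rw [ae_iff]
          simpa using measure_singleton (δ : ℝ)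
        have hcz : (∫ u in (0:ℝ)..δ, f u) = ∫ u in (0:ℝ)..δ, (0:ℝ) := by
          refine intervalIntegral.integral_congr_ae ?_
          filter_upwards [hne] with x hx hmem
          rw [uIoc_of_le hδ.le] at hmem
          have hxδ : x < δ := lt_of_le_of_ne hmem.2 hx
          rw [hf]; simp only
          rw [kTypeII, if_pos hxδ, zero_mul]
        rw [hcz]; simp
      have hmono : (∫ u in (δ:ℝ)..(2*δ), (lam/lp)^2 * u) ≤ ∫ u in (δ:ℝ)..(2*δ), f u := by
        refine intervalIntegral.integral_mono_on (by linarith)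
          ((continuous_const.mul continuous_id).intervalIntegrable _ _) (hInt δ (2*δ)) ?_
        intro u hu
        have hup : 0 < u := lt_of_lt_of_le hδ hu.1
        have hku : (lam/lp)^2 ≤ kTypeII lp δ u := by
          have := hk u hu
          rw [div_pow, div_le_iff₀ (by positivity)]
          linarith [this]
        rw [hf]
        calc (lam/lp)^2 * u ≤ kTypeII lp δ u * u := mul_le_mul_of_nonneg_right hku hup.le
        _ = _ := rfl
      have hval : (∫ u in (δ:ℝ)..(2*δ), (lam/lp)^2 * u) = (lam/lp)^2 * (3*δ^2/2) := by
        rw [intervalIntegral.integral_const_mul, integral_id]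
        ring
      have hadd : I2 = (∫ u in (0:ℝ)..δ, f u) + ∫ u in (δ:ℝ)..(2*δ), f u :=
        (intervalIntegral.integral_add_adjacent_intervals (hInt 0 δ) (hInt δ (2*δ))).symm
      rw [hadd, hzero, zero_add, ← hval]
      exact hmono
    have hCge : 3*π*δ^2 ≤ C := by
      have h5 : 2 * π * (lp/lam)^2 * ((lam/lp)^2 * (3*δ^2/2)) ≤ C :=
        mul_le_mul_of_nonneg_left hlow (by positivity)
      have h6 : 2 * π * (lp/lam)^2 * ((lam/lp)^2 * (3*δ^2/2)) = 3*π*δ^2 := by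
        field_simp
      linarith [h5, h6.symm.le, h6.ge]
    have hinv : 1/lam = π*δ^2/(1-E) := by
      rw [hlamdef, lamTypeII, ← hE, one_div_div]
    have hgoal : -(π * δ ^ 2) * Real.exp (-π * lp * δ ^ 2) / (1 - Real.exp (-π * lp * δ ^ 2))
        = π*δ^2 - π*δ^2/(1-E) := by
      have h9 : (1:ℝ) - E ≠ 0 := by linarith
      rw [hEarg, ← hE]
      field_simp
      ring
    rw [hgoal, hL, hinv]
    linarith
  · rw [hEarg, ← hE]
    exact div_neg_of_neg_of_pos
      (by nlinarith [mul_pos (mul_pos hπ (pow_pos hδ 2)) hEpos]) (by linarith)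
end

section
/- Let 0 < β ≤ 1, c > 0 and r ≥ 0. Then the infinite products ∏_{k=1}^∞ (1 − β·γ̃(k, (c/β) r²)) and ∏_{k=2}^∞ (1 − β·γ̃(k, (c/β) r²)) both converge to strictly positive real numbers, and their ratio satisfies ( ∏_{k=2}^∞ (1 − β·γ̃(k, (c/β) r²)) ) / ( ∏_{k=1}^∞ (1 − β·γ̃(k, (c/β) r²)) ) = 1 / ( 1 − β + β e^{−(c/β) r²} ). -/
/-!
For integer shape, `γ̃(k + 1, x) = 1 - e^{-x} ∑_{j ≤ k} x^j / j!` (differentiate the right-hand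
side), so every factor `1 - β γ̃(k + 1, x)` is at least `e^{-x} > 0`, while
`γ̃(k + 1, x) ≤ x^{k+1} / (k+1)!` (bound `e^{-u}` by `1` in the integral) makes the factors converge
to `1` summably; hence both products converge to positive limits through their logarithms.
The two products differ only by the first factor `1 - β γ̃(1, x) = 1 - β (1 - e^{-x})`.
-/

open Real Filter Topology MeasureTheory

noncomputable def normLowerGamma (a x : ℝ) : ℝ :=
  (∫ u in (0 : ℝ)..x, Real.exp (-u) * u ^ (a - 1)) / Real.Gamma a

open Finset Nat

theorem Real.multipliable_and_tprod_pos_of_summable_sub_one {ι : Type*} {f : ι → ℝ}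
    (hpos : ∀ i, 0 < f i) (hf : Summable fun i ↦ f i - 1) : Multipliable f ∧ 0 < ∏' i, f i := by
  have hlog : Summable fun i ↦ log (f i) := by
    simpa using Real.summable_log_one_add_of_summable hf
  exact ⟨Real.multipliable_of_summable_log hpos hlog,
    Real.rexp_tsum_eq_tprod hpos hlog ▸ exp_pos _⟩

theorem hasDerivAt_sum_range_pow_div_factorial (n : ℕ) (t : ℝ) :
    HasDerivAt (fun t : ℝ ↦ ∑ j ∈ range (n + 1), t ^ j / (j ! : ℝ))
      (∑ j ∈ range n, t ^ j / (j ! : ℝ)) t := by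
  induction n with
  | zero => simpa using hasDerivAt_const t (1 : ℝ)
  | succ n ih =>
    have hterm : HasDerivAt (fun t : ℝ ↦ t ^ (n + 1) / ((n + 1)! : ℝ)) (t ^ n / (n ! : ℝ)) t := by
      refine ((hasDerivAt_pow (n + 1) t).div_const _).congr_deriv ?_
      rw [Nat.factorial_succ]
      push_cast
      field_simp
    rw [sum_range_succ _ n]
    simp only [sum_range_succ _ (n + 1)]
    exact ih.fun_add hterm

theorem hasDerivAt_exp_neg_mul_sum_range_pow_div_factorial (k : ℕ) (t : ℝ) :
    HasDerivAt (fun t : ℝ ↦ -(exp (-t) * ∑ j ∈ range (k + 1), t ^ j / (j ! : ℝ)))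
      (exp (-t) * t ^ k / (k ! : ℝ)) t := by
  have hexp : HasDerivAt (fun t : ℝ ↦ exp (-t)) (-exp (-t)) t := by
    simpa using (hasDerivAt_neg t).exp
  refine (hexp.fun_mul (hasDerivAt_sum_range_pow_div_factorial k t)).fun_neg.congr_deriv ?_
  rw [sum_range_succ]
  ring

theorem normLowerGamma_natCast_add_one (k : ℕ) (x : ℝ) :
    normLowerGamma (k + 1) x = 1 - exp (-x) * ∑ j ∈ range (k + 1), x ^ j / (j ! : ℝ) := by
  have hint : ∫ u in (0 : ℝ)..x, exp (-u) * u ^ k / (k ! : ℝ)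
      = 1 - exp (-x) * ∑ j ∈ range (k + 1), x ^ j / (j ! : ℝ) := by
    rw [intervalIntegral.integral_eq_sub_of_hasDerivAt
      (fun u _ ↦ hasDerivAt_exp_neg_mul_sum_range_pow_div_factorial k u)
      (by apply Continuous.intervalIntegrable; fun_prop)]
    simp [sum_range_succ']
    ring
  rw [normLowerGamma, add_sub_cancel_right, Gamma_nat_eq_factorial, ← hint,
    intervalIntegral.integral_div]
  simp only [rpow_natCast]

theorem normLowerGamma_one (x : ℝ) : normLowerGamma 1 x = 1 - exp (-x) := by
  simpa using normLowerGamma_natCast_add_one 0 x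

theorem normLowerGamma_nonneg {a x : ℝ} (ha : 0 < a) (hx : 0 ≤ x) : 0 ≤ normLowerGamma a x :=
  div_nonneg (intervalIntegral.integral_nonneg hx fun _ hu ↦
    mul_nonneg (exp_nonneg _) (rpow_nonneg hu.1 _)) (Gamma_pos_of_pos ha).le

theorem normLowerGamma_le_rpow_div_Gamma {a x : ℝ} (ha : 0 < a) (hx : 0 ≤ x) :
    normLowerGamma a x ≤ x ^ a / Gamma (a + 1) := by
  have hpow : IntervalIntegrable (fun u : ℝ ↦ u ^ (a - 1)) volume 0 x :=
    intervalIntegral.intervalIntegrable_rpow' (by linarith)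
  have hmono : ∫ u in (0 : ℝ)..x, exp (-u) * u ^ (a - 1) ≤ ∫ u in (0 : ℝ)..x, u ^ (a - 1) :=
    intervalIntegral.integral_mono_on hx (hpow.continuousOn_mul (by fun_prop)) hpow
      fun u hu ↦ mul_le_of_le_one_left (rpow_nonneg hu.1 _) (exp_le_one_iff.2 (by linarith [hu.1]))
  have hint : ∫ u in (0 : ℝ)..x, u ^ (a - 1) = x ^ a / a := by
    rw [integral_rpow (Or.inl (by linarith)), sub_add_cancel, zero_rpow ha.ne']
    ring
  rw [Gamma_add_one ha.ne', ← div_div, normLowerGamma]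
  exact div_le_div_of_nonneg_right (hint ▸ hmono) (Gamma_pos_of_pos ha).le

theorem summable_normLowerGamma_natCast_add_one {x : ℝ} (hx : 0 ≤ x) :
    Summable fun k : ℕ ↦ normLowerGamma (k + 1) x := by
  refine Summable.of_nonneg_of_le (fun k ↦ normLowerGamma_nonneg (by positivity) hx)
    (fun k ↦ ?_) ((summable_nat_add_iff 1).2 (Real.summable_pow_div_factorial x))
  have h := normLowerGamma_le_rpow_div_Gamma (a := (k + 1 : ℕ)) (by positivity) hx
  rwa [Gamma_nat_eq_factorial, rpow_natCast, Nat.cast_succ] at h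

theorem exp_neg_le_one_sub_normLowerGamma (k : ℕ) {x : ℝ} (hx : 0 ≤ x) :
    exp (-x) ≤ 1 - normLowerGamma (k + 1) x := by
  have hsum : 1 ≤ ∑ j ∈ range (k + 1), x ^ j / (j ! : ℝ) := by
    simpa using single_le_sum (f := fun j ↦ x ^ j / (j ! : ℝ)) (fun j _ ↦ by positivity)
      (mem_range.2 k.succ_pos)
  rw [normLowerGamma_natCast_add_one, sub_sub_cancel]
  exact le_mul_of_one_le_right (exp_nonneg _) hsum

theorem one_sub_mul_normLowerGamma_pos (k : ℕ) {β x : ℝ} (hβ : β ≤ 1) (hx : 0 ≤ x) :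
    0 < 1 - β * normLowerGamma (k + 1) x :=
  calc 0 < exp (-x) := exp_pos _
    _ ≤ 1 - normLowerGamma (k + 1) x := exp_neg_le_one_sub_normLowerGamma k hx
    _ ≤ 1 - β * normLowerGamma (k + 1) x :=
      sub_le_sub_left (mul_le_of_le_one_left (normLowerGamma_nonneg (by positivity) hx) hβ) _

theorem ginibre_J_function_formula_general (β c r : ℝ) (hβ0 : 0 < β) (hβ1 : β ≤ 1) (hc : 0 < c) :
    Multipliable (fun k : ℕ => 1 - β * normLowerGamma (k + 1) ((c / β) * r ^ 2)) ∧
    0 < (∏' k : ℕ, (1 - β * normLowerGamma (k + 1) ((c / β) * r ^ 2))) ∧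
    Multipliable (fun k : ℕ => 1 - β * normLowerGamma (k + 2) ((c / β) * r ^ 2)) ∧
    0 < (∏' k : ℕ, (1 - β * normLowerGamma (k + 2) ((c / β) * r ^ 2))) ∧
    (∏' k : ℕ, (1 - β * normLowerGamma (k + 2) ((c / β) * r ^ 2))) /
        (∏' k : ℕ, (1 - β * normLowerGamma (k + 1) ((c / β) * r ^ 2)))
      = 1 / (1 - β + β * Real.exp (-(c / β) * r ^ 2)) := by
  set x := (c / β) * r ^ 2
  have hx : 0 ≤ x := by positivity
  set g : ℕ → ℝ := fun k ↦ 1 - β * normLowerGamma (k + 1) x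
  have hpos (k : ℕ) : 0 < g k := one_sub_mul_normLowerGamma_pos k hβ1 hx
  have hsum : Summable fun k ↦ g k - 1 := by
    simpa [g] using ((summable_normLowerGamma_natCast_add_one hx).mul_left β).neg
  have hshift : (fun k : ℕ ↦ 1 - β * normLowerGamma (k + 2) x) = fun k ↦ g (k + 1) := by
    ext k
    simp only [g]
    push_cast
    ring_nf
  obtain ⟨hmul, hprod⟩ := Real.multipliable_and_tprod_pos_of_summable_sub_one hpos hsum
  obtain ⟨hmul', hprod'⟩ := Real.multipliable_and_tprod_pos_of_summable_sub_one
    (fun k ↦ hpos (k + 1)) ((summable_nat_add_iff 1).2 hsum)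
  have hg0 : g 0 = 1 - β + β * exp (-(c / β) * r ^ 2) := by
    simp only [g, Nat.cast_zero, zero_add, normLowerGamma_one, neg_mul, x]
    ring
  refine ⟨hmul, hprod, hshift ▸ hmul', hshift ▸ hprod', ?_⟩
  rw [hshift, tprod_eq_zero_mul' hmul', hg0]
  field_simp [hprod'.ne']

/-- For the scaled β-Ginibre point process, the infinite products
`∏_{k=1}^∞ (1 − β γ̃(k, (c/β)r²))` (the complementary empty space function `1 − F(r)`) and
`∏_{k=2}^∞ (1 − β γ̃(k, (c/β)r²))` (the complementary nearest-neighbor distance distribution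
`1 − G(r)`) converge to strictly positive reals, and their ratio — the J function — equals
`1/(1 − β + β e^{−(c/β)r²})`. -/
theorem ginibre_J_function_formula (β c r : ℝ) (hβ0 : 0 < β) (hβ1 : β ≤ 1) (hc : 0 < c)
    (hr : 0 ≤ r) :
    Multipliable (fun k : ℕ => 1 - β * normLowerGamma (k + 1) ((c / β) * r ^ 2)) ∧
    0 < (∏' k : ℕ, (1 - β * normLowerGamma (k + 1) ((c / β) * r ^ 2))) ∧
    Multipliable (fun k : ℕ => 1 - β * normLowerGamma (k + 2) ((c / β) * r ^ 2)) ∧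
    0 < (∏' k : ℕ, (1 - β * normLowerGamma (k + 2) ((c / β) * r ^ 2))) ∧
    (∏' k : ℕ, (1 - β * normLowerGamma (k + 2) ((c / β) * r ^ 2))) /
        (∏' k : ℕ, (1 - β * normLowerGamma (k + 1) ((c / β) * r ^ 2)))
      = 1 / (1 - β + β * Real.exp (-(c / β) * r ^ 2)) :=
  ginibre_J_function_formula_general β c r hβ0 hβ1 hc
end

section
/- Let α > 2, r₀ > 0, c > 0 and 0 < β ≤ 1. On a probability space, let {(Q_k, h_k, T_k)}_{k≥2} be a mutually independent family of random variables where Q_k has the Gamma distribution with shape k and rate c/β, h_k is exponential with mean 1, and T_k is Bernoulli with P(T_k = 1) = β. Then the random series I = Σ_{k=2}^∞ (max{r₀², Q_k})^{−α/2} h_k T_k converges almost surely and E[I] = c r₀^{2−α}·α/(α−2) + β r₀^{−α}(e^{−(c/β)r₀²} − 1) − c^{α/2} β^{1−α/2} Γ(1 − α/2, (c/β) r₀²), where Γ(a, x) = ∫ₓ^∞ t^{a−1} e^{−t} dt is the upper incomplete gamma function. -/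
open Real MeasureTheory ProbabilityTheory Set

/-- The upper incomplete gamma function `Γ(a,x) = ∫ₓ^∞ t^{a−1} e^{−t} dt`. -/
noncomputable def upperGamma (a x : ℝ) : ℝ :=
  ∫ t in Ioi x, t ^ (a - 1) * Real.exp (-t)

/-!
By independence, the `k`-th term has mean `β · E[max(r₀², Q_k)^{-α/2}]`, since `E h_k = 1` and
`E T_k = β`. Monotone convergence turns the mean of the series into
`β ∫ max(r₀², t)^{-α/2} ∑_k f_k(t) dt`, where the Gamma(`k`, `c/β`) densities `f_k`, `k ≥ 2`,
are `c/β` times the Poisson weights of `ct/β` at `k - 1`, so they add up to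
`(c/β)(1 - e^{-ct/β})`. Splitting the integral at `r₀²`, where the path loss stops being flat,
gives an elementary part and an incomplete gamma part. The mean is finite, so the series
converges almost surely.
-/

open scoped Nat ENNReal

lemma mul_one_sub_exp_neg_mul_nonneg {r t : ℝ} (hr : 0 ≤ r) (ht : 0 ≤ t) :
    0 ≤ r * (1 - exp (-(r * t))) :=
  mul_nonneg hr (sub_nonneg.2 (exp_le_one_iff.2 (by nlinarith)))

lemma mul_one_sub_exp_neg_mul_nonpos {r t : ℝ} (hr : 0 ≤ r) (ht : t ≤ 0) :
    r * (1 - exp (-(r * t))) ≤ 0 :=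
  mul_nonpos_of_nonneg_of_nonpos hr (sub_nonpos.2 (one_le_exp_iff.2 (by nlinarith)))

namespace ProbabilityTheory

lemma measurable_gammaPDF (a r : ℝ) : Measurable (gammaPDF a r) :=
  (measurable_gammaPDFReal a r).ennreal_ofReal

lemma gammaPDFReal_nat_add_two {x : ℝ} (r : ℝ) (hx : 0 ≤ x) (k : ℕ) :
    gammaPDFReal (k + 2) r x = r * (exp (-(r * x)) * (r * x) ^ (k + 1) / (k + 1)!) := by
  have hΓ : Gamma ((k : ℝ) + 2) = (k + 1)! := by
    simpa [add_assoc, one_add_one_eq_two] using Real.Gamma_nat_eq_factorial (k + 1)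
  rw [gammaPDFReal, if_pos hx, hΓ, show (k : ℝ) + 2 - 1 = (k + 1 : ℕ) by push_cast; ring,
    show (k : ℝ) + 2 = (k + 2 : ℕ) by push_cast; ring, rpow_natCast, rpow_natCast]
  ring

lemma hasSum_gammaPDFReal_nat_add_two {x : ℝ} (r : ℝ) (hx : 0 ≤ x) :
    HasSum (fun k : ℕ ↦ gammaPDFReal (k + 2) r x) (r * (1 - exp (-(r * x)))) := by
  have hexp := (hasSum_nat_add_iff' 1).2 (NormedSpace.expSeries_div_hasSum_exp (r * x))
  simp only [Finset.range_one, Finset.sum_singleton, pow_zero, Nat.factorial_zero, Nat.cast_one,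
    div_one, ← exp_eq_exp_ℝ] at hexp
  have hterms : (fun k : ℕ ↦ gammaPDFReal (k + 2) r x)
      = fun k ↦ r * (exp (-(r * x)) * ((r * x) ^ (k + 1) / (k + 1)!)) :=
    funext fun k ↦ by rw [gammaPDFReal_nat_add_two r hx, mul_div_assoc]
  rw [hterms, show 1 - exp (-(r * x)) = exp (-(r * x)) * (exp (r * x) - 1) by
    rw [mul_sub, ← exp_add, neg_add_cancel, exp_zero, mul_one]]
  exact (hexp.mul_left _).mul_left r

lemma tsum_gammaPDF_nat_add_two {r : ℝ} (hr : 0 < r) (x : ℝ) :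
    ∑' k : ℕ, gammaPDF (k + 2) r x = ENNReal.ofReal (r * (1 - exp (-(r * x)))) := by
  rcases lt_or_ge x 0 with hx | hx
  · simp [gammaPDF_of_neg hx, ENNReal.ofReal_of_nonpos (mul_one_sub_exp_neg_mul_nonpos hr.le hx.le)]
  · rw [← (hasSum_gammaPDFReal_nat_add_two r hx).tsum_eq,
      ENNReal.ofReal_tsum_of_nonneg (fun k ↦ gammaPDFReal_nonneg (by positivity) hr x)
        (hasSum_gammaPDFReal_nat_add_two r hx).summable]
    rfl

lemma sum_gammaMeasure_nat_add_two {r : ℝ} (hr : 0 < r) :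
    Measure.sum (fun k : ℕ ↦ gammaMeasure (k + 2) r)
      = volume.withDensity fun x ↦ ENNReal.ofReal (r * (1 - exp (-(r * x)))) := by
  simp_rw [gammaMeasure, ← withDensity_tsum
    (fun k : ℕ ↦ measurable_gammaPDF (k + 2) r)]
  congr 1
  ext x
  rw [ENNReal.tsum_apply]
  exact tsum_gammaPDF_nat_add_two hr x

lemma lintegral_ofReal_gammaMeasure {a r : ℝ} (ha : 0 < a) (hr : 0 < r) :
    ∫⁻ x, ENNReal.ofReal x ∂gammaMeasure a r = ENNReal.ofReal (a / r) := by
  have hmean : ∀ x, gammaPDF a r x * ENNReal.ofReal x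
      = ENNReal.ofReal (a / r) * gammaPDF (a + 1) r x := by
    intro x
    rcases lt_or_ge x 0 with hx | hx
    · simp [gammaPDF_of_neg hx]
    have hxa : x ^ a = x ^ (a - 1) * x := by
      rw [← rpow_add_one' hx (by simpa using ha.ne'), sub_add_cancel]
    rw [gammaPDF_of_nonneg hx, gammaPDF_of_nonneg hx, ← ENNReal.ofReal_mul (by positivity),
      ← ENNReal.ofReal_mul (by positivity), Gamma_add_one ha.ne', rpow_add_one hr.ne',
      add_sub_cancel_right, hxa]
    congr 1
    field_simp
  rw [gammaMeasure, lintegral_withDensity_eq_lintegral_mul _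
      (measurable_gammaPDF a r) ENNReal.measurable_ofReal]
  simp only [Pi.mul_apply, hmean]
  rw [lintegral_const_mul _ (measurable_gammaPDF _ r),
    lintegral_gammaPDF_eq_one (by positivity) hr, mul_one]

lemma ae_nonneg_gammaMeasure (a r : ℝ) : ∀ᵐ x ∂gammaMeasure a r, 0 ≤ x := by
  rw [gammaMeasure, ae_withDensity_iff (measurable_gammaPDF a r)]
  exact ae_of_all _ fun x hx ↦ not_lt.1 fun hneg ↦ hx (gammaPDF_of_neg hneg)

lemma ae_nonneg_expMeasure (r : ℝ) : ∀ᵐ x ∂expMeasure r, 0 ≤ x :=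
  ae_nonneg_gammaMeasure 1 r

lemma tsum_lintegral_ofReal_gammaMeasure_nat_add_two {r : ℝ} (hr : 0 < r)
    {g : ℝ → ℝ} (hg : Measurable g) (hg0 : ∀ x, 0 ≤ g x)
    (hint : IntegrableOn (fun x ↦ g x * (r * (1 - exp (-(r * x))))) (Ioi 0)) :
    ∑' k : ℕ, ∫⁻ x, ENNReal.ofReal (g x) ∂gammaMeasure (k + 2) r
      = ENNReal.ofReal (∫ x in Ioi 0, g x * (r * (1 - exp (-(r * x))))) := by
  have hsupp : (fun x ↦ ENNReal.ofReal (g x * (r * (1 - exp (-(r * x)))))).support ⊆ Ioi 0 :=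
    fun x hx ↦ not_le.1 fun hx0 ↦ hx (ENNReal.ofReal_of_nonpos
      (mul_nonpos_of_nonneg_of_nonpos (hg0 x) (mul_one_sub_exp_neg_mul_nonpos hr.le hx0)))
  rw [← lintegral_sum_measure, sum_gammaMeasure_nat_add_two hr,
    lintegral_withDensity_eq_lintegral_mul _ (by fun_prop) hg.ennreal_ofReal,
    ofReal_integral_eq_lintegral_ofReal hint, setLIntegral_eq_of_support_subset hsupp]
  · congr 1
    ext x
    rw [Pi.mul_apply, ENNReal.ofReal_mul (hg0 x), mul_comm]
  · filter_upwards [ae_restrict_mem measurableSet_Ioi] with x hx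
    exact mul_nonneg (hg0 x) (mul_one_sub_exp_neg_mul_nonneg hr.le (le_of_lt hx))

end ProbabilityTheory

lemma integral_Ioc_mul_one_sub_exp_neg_mul (r : ℝ) {a : ℝ} (ha : 0 ≤ a) :
    ∫ t in Ioc 0 a, r * (1 - exp (-(r * t))) = r * a - 1 + exp (-(r * a)) := by
  have hderiv : ∀ t ∈ uIcc 0 a, HasDerivAt (fun t ↦ r * t + exp (-(r * t)))
      (r * (1 - exp (-(r * t)))) t := fun t _ ↦ by
    have hlin : HasDerivAt (fun t ↦ r * t) r t := by
      simpa using (hasDerivAt_id t).const_mul r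
    exact (hlin.add hlin.neg.exp).congr_deriv (by simp only [Pi.neg_apply]; ring)
  rw [← intervalIntegral.integral_of_le ha, intervalIntegral.integral_eq_sub_of_hasDerivAt
    hderiv ((by fun_prop : Continuous fun t ↦ r * (1 - exp (-(r * t)))).intervalIntegrable 0 a)]
  simp only [mul_zero, neg_zero, exp_zero, zero_add]
  ring

lemma integral_Ioi_rpow_mul_exp_neg_mul (s : ℝ) {r a : ℝ} (hr : 0 < r) (ha : 0 ≤ a) :
    ∫ t in Ioi a, t ^ (s - 1) * exp (-(r * t)) = r ^ (-s) * upperGamma s (r * a) := by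
  have hsub := integral_comp_mul_left_Ioi (fun u ↦ u ^ (s - 1) * exp (-u)) a hr
  have hscale : ∀ t ∈ Ioi a, (r * t) ^ (s - 1) * exp (-(r * t))
      = r ^ (s - 1) * (t ^ (s - 1) * exp (-(r * t))) := fun t ht ↦ by
    rw [mul_rpow hr.le (ha.trans (le_of_lt ht))]; ring
  rw [setIntegral_congr_fun measurableSet_Ioi hscale, integral_const_mul, smul_eq_mul] at hsub
  have hrs : r ^ (s - 1) ≠ 0 := (rpow_pos_of_pos hr _).ne'
  rw [upperGamma, ← inv_mul_cancel_left₀ hrs (∫ t in Ioi a, _), hsub, ← mul_assoc,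
    ← rpow_neg hr.le, ← rpow_neg_one r, ← rpow_add hr]
  ring_nf

lemma integrableOn_Ioi_rpow_mul_exp_neg_mul {p r a : ℝ} (hp : p < -1) (hr : 0 ≤ r) (ha : 0 < a) :
    IntegrableOn (fun t ↦ t ^ p * exp (-(r * t))) (Ioi a) := by
  refine (integrableOn_Ioi_rpow_of_lt hp ha).mono' (by fun_prop) ?_
  filter_upwards [ae_restrict_mem measurableSet_Ioi] with t ht
  have ht0 : 0 < t := ha.trans ht
  rw [norm_of_nonneg (by positivity)]
  exact mul_le_of_le_one_right (by positivity) (exp_le_one_iff.2 (by nlinarith))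

lemma integral_Ioi_max_rpow_mul {p a : ℝ} {g : ℝ → ℝ} (ha : 0 < a)
    (hg₁ : IntegrableOn g (Ioc 0 a)) (hg₂ : IntegrableOn (fun t ↦ t ^ p * g t) (Ioi a)) :
    IntegrableOn (fun t ↦ max a t ^ p * g t) (Ioi 0) ∧
      ∫ t in Ioi 0, max a t ^ p * g t
        = a ^ p * (∫ t in Ioc 0 a, g t) + ∫ t in Ioi a, t ^ p * g t := by
  have h₁ : EqOn (fun t ↦ max a t ^ p * g t) (fun t ↦ a ^ p * g t) (Ioc 0 a) :=
    fun t ht ↦ by simp only [max_eq_left ht.2]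
  have h₂ : EqOn (fun t ↦ max a t ^ p * g t) (fun t ↦ t ^ p * g t) (Ioi a) :=
    fun t ht ↦ by simp only [max_eq_right (mem_Ioi.1 ht).le]
  have hi₁ := IntegrableOn.congr_fun (hg₁.const_mul (a ^ p)) h₁.symm measurableSet_Ioc
  have hi₂ := hg₂.congr_fun h₂.symm measurableSet_Ioi
  have hU : Ioi 0 = Ioc 0 a ∪ Ioi a := (Ioc_union_Ioi_eq_Ioi ha.le).symm
  rw [hU]
  refine ⟨hi₁.union hi₂, ?_⟩
  rw [setIntegral_union (Ioc_disjoint_Ioi le_rfl) measurableSet_Ioi hi₁ hi₂,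
    setIntegral_congr_fun measurableSet_Ioc h₁, integral_const_mul,
    setIntegral_congr_fun measurableSet_Ioi h₂]

lemma integral_Ioi_max_rpow_mul_one_sub_exp {p a r : ℝ} (hp : 1 < p) (ha : 0 < a) (hr : 0 < r) :
    IntegrableOn (fun t ↦ max a t ^ (-p) * (r * (1 - exp (-(r * t))))) (Ioi 0) ∧
      ∫ t in Ioi 0, max a t ^ (-p) * (r * (1 - exp (-(r * t))))
        = a ^ (-p) * (r * a - 1 + exp (-(r * a))) + r * (a ^ (1 - p) / (p - 1))
          - r ^ p * upperGamma (1 - p) (r * a) := by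
  have hp' : -p < -1 := by linarith
  have hpow := integrableOn_Ioi_rpow_of_lt hp' ha
  have hexp := integrableOn_Ioi_rpow_mul_exp_neg_mul hp' hr.le ha
  have hsplit : (fun t ↦ t ^ (-p) * (r * (1 - exp (-(r * t)))))
      = fun t ↦ r * t ^ (-p) - r * (t ^ (-p) * exp (-(r * t))) := by
    ext t; ring
  have hg₂ : IntegrableOn (fun t ↦ t ^ (-p) * (r * (1 - exp (-(r * t))))) (Ioi a) := by
    rw [hsplit]; exact (hpow.const_mul r).sub (hexp.const_mul r)
  obtain ⟨hint, heq⟩ := integral_Ioi_max_rpow_mul ha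
    (by fun_prop : Continuous fun t ↦ r * (1 - exp (-(r * t)))).integrableOn_Ioc hg₂
  refine ⟨hint, ?_⟩
  have hΓ := integral_Ioi_rpow_mul_exp_neg_mul (1 - p) hr ha.le
  rw [show 1 - p - 1 = -p by ring, neg_sub, rpow_sub_one hr.ne'] at hΓ
  rw [heq, integral_Ioc_mul_one_sub_exp_neg_mul r ha.le, hsplit,
    integral_sub (hpow.const_mul r) (hexp.const_mul r), integral_const_mul, integral_const_mul,
    integral_Ioi_rpow_of_lt hp' ha, hΓ, show -p + 1 = 1 - p by ring]
  have hp1 : p - 1 ≠ 0 := by linarith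
  have hp2 : 1 - p ≠ 0 := by linarith
  field_simp
  ring

section Probability

variable {Ω : Type*} [MeasurableSpace Ω] {P : Measure Ω}

lemma ae_nonneg_smul_dirac_zero_add_smul_dirac_one (p q : ℝ≥0∞) :
    ∀ᵐ x ∂(p • Measure.dirac (0 : ℝ) + q • Measure.dirac 1), 0 ≤ x := by
  rw [ae_add_measure_iff]
  exact ⟨Measure.ae_smul_measure (by simp) p, Measure.ae_smul_measure (by simp) q⟩

lemma lintegral_ofReal_smul_dirac_zero_add_smul_dirac_one (p q : ℝ≥0∞) :
    ∫⁻ x, ENNReal.ofReal x ∂(p • Measure.dirac (0 : ℝ) + q • Measure.dirac 1) = q := by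
  simp [lintegral_add_measure, lintegral_smul_measure]

lemma lintegral_ofReal_mul_mul_of_iIndepFun {X Y Z : Ω → ℝ} (hind : iIndepFun ![X, Y, Z] P)
    (hX : Measurable X) (hY : Measurable Y) (hZ : Measurable Z)
    (hX0 : 0 ≤ᵐ[P] X) (hY0 : 0 ≤ᵐ[P] Y) :
    ∫⁻ ω, ENNReal.ofReal (X ω * Y ω * Z ω) ∂P
      = (∫⁻ ω, ENNReal.ofReal (X ω) ∂P) * (∫⁻ ω, ENNReal.ofReal (Y ω) ∂P)
        * ∫⁻ ω, ENNReal.ofReal (Z ω) ∂P := by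
  have hprod := lintegral_prod_eq_prod_lintegral_of_indepFun Finset.univ
    (fun i ω ↦ ENNReal.ofReal (![X, Y, Z] i ω))
    (hind.comp (fun _ ↦ ENNReal.ofReal) fun _ ↦ ENNReal.measurable_ofReal)
    (fun i ↦ ENNReal.measurable_ofReal.comp (by fin_cases i <;> assumption))
  simp only [Fin.prod_univ_three, Matrix.cons_val_zero, Matrix.cons_val_one,
    Matrix.cons_val_two, Matrix.head_cons, Matrix.tail_cons] at hprod
  rw [← hprod]
  refine lintegral_congr_ae ?_
  filter_upwards [hX0, hY0] with ω hXω hYω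
  rw [ENNReal.ofReal_mul (mul_nonneg hXω hYω), ENNReal.ofReal_mul hXω]

lemma lintegral_ofReal_comp_mul_mul_of_iIndepFun {Y H B : Ω → ℝ} {g : ℝ → ℝ}
    (hg : Measurable g) (hg0 : ∀ x, 0 ≤ g x)
    (hY : Measurable Y) (hH : Measurable H) (hB : Measurable B) (hind : iIndepFun ![Y, H, B] P)
    {p q : ℝ≥0∞} (hHlaw : P.map H = expMeasure 1)
    (hBlaw : P.map B = p • Measure.dirac 0 + q • Measure.dirac 1) :
    ∫⁻ ω, ENNReal.ofReal (g (Y ω) * H ω * B ω) ∂P = q * ∫⁻ x, ENNReal.ofReal (g x) ∂P.map Y := by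
  have hind' : iIndepFun ![g ∘ Y, H, B] P := by
    convert hind.comp ![g, id, id] (fun i ↦ by fin_cases i <;> simp [hg, measurable_id]) using 1
    ext i : 1
    fin_cases i <;> rfl
  have hH0 : 0 ≤ᵐ[P] H :=
    ae_of_ae_map (p := (0 ≤ ·)) hH.aemeasurable (hHlaw ▸ ae_nonneg_expMeasure 1)
  refine (lintegral_ofReal_mul_mul_of_iIndepFun hind' (hg.comp hY) hH hB
    (ae_of_all _ fun ω ↦ hg0 _) hH0).trans ?_
  simp only [Function.comp_apply]
  rw [lintegral_map (f := fun x ↦ ENNReal.ofReal (g x)) (by fun_prop) hY,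
    ← lintegral_map ENNReal.measurable_ofReal hH, ← lintegral_map ENNReal.measurable_ofReal hB,
    hHlaw, hBlaw, expMeasure, lintegral_ofReal_gammaMeasure one_pos one_pos,
    lintegral_ofReal_smul_dirac_zero_add_smul_dirac_one, div_one, ENNReal.ofReal_one, mul_one,
    mul_comm]

lemma ae_summable_and_integral_tsum_eq_of_nonneg {ι : Type*} [Countable ι] {X : ι → Ω → ℝ}
    (hX : ∀ i, Measurable (X i)) (hX0 : ∀ i, 0 ≤ᵐ[P] X i) {m : ℝ} (hm : 0 ≤ m)
    (hsum : ∑' i, ∫⁻ ω, ENNReal.ofReal (X i ω) ∂P = ENNReal.ofReal m) :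
    (∀ᵐ ω ∂P, Summable fun i ↦ X i ω) ∧ ∫ ω, ∑' i, X i ω ∂P = m := by
  set S : Ω → ℝ≥0∞ := fun ω ↦ ∑' i, ENNReal.ofReal (X i ω)
  have hS : Measurable S := Measurable.tsum fun i ↦ (hX i).ennreal_ofReal
  have hSint : ∫⁻ ω, S ω ∂P = ENNReal.ofReal m := by
    rw [lintegral_tsum fun i ↦ (hX i).ennreal_ofReal.aemeasurable, hsum]
  have hSfin : ∀ᵐ ω ∂P, S ω < ⊤ := ae_lt_top hS (hSint ▸ ENNReal.ofReal_ne_top)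
  have hpointwise : ∀ᵐ ω ∂P, (Summable fun i ↦ X i ω) ∧ ∑' i, X i ω = (S ω).toReal := by
    filter_upwards [hSfin, ae_all_iff.2 hX0] with ω hω hω0
    have hsumm : Summable fun i ↦ X i ω :=
      (ENNReal.summable_toReal hω.ne).congr fun i ↦ ENNReal.toReal_ofReal (hω0 i)
    refine ⟨hsumm, ?_⟩
    rw [ENNReal.tsum_toReal_eq fun i ↦ ENNReal.ofReal_ne_top]
    exact tsum_congr fun i ↦ (ENNReal.toReal_ofReal (hω0 i)).symm
  refine ⟨hpointwise.mono fun ω hω ↦ hω.1, ?_⟩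
  rw [integral_congr_ae (hpointwise.mono fun ω hω ↦ hω.2),
    integral_toReal hS.aemeasurable hSfin, hSint, ENNReal.toReal_ofReal hm]

end Probability

lemma mul_integral_Ioi_max_sq_rpow_mul_one_sub_exp {α r₀ c β : ℝ} (hα : 2 < α) (hr₀ : 0 < r₀)
    (hc : 0 < c) (hβ : 0 < β) :
    β * ∫ t in Ioi 0, max (r₀ ^ 2) t ^ (-(α / 2)) * (c / β * (1 - exp (-(c / β * t))))
      = c * r₀ ^ (2 - α) * (α / (α - 2))
        + β * r₀ ^ (-α) * (Real.exp (-(c / β) * r₀ ^ 2) - 1)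
        - c ^ (α / 2) * β ^ (1 - α / 2) * upperGamma (1 - α / 2) ((c / β) * r₀ ^ 2) := by
  have hl : 0 < c / β := div_pos hc hβ
  rw [(integral_Ioi_max_rpow_mul_one_sub_exp (by linarith) (by positivity) hl).2]
  have hsq : ∀ y : ℝ, (r₀ ^ 2) ^ y = r₀ ^ (2 * y) := fun y ↦ by
    rw [← rpow_natCast r₀ 2, ← rpow_mul hr₀.le, Nat.cast_ofNat]
  have hpow : β * (c / β) ^ (α / 2) = c ^ (α / 2) * β ^ (1 - α / 2) := by
    rw [div_rpow hc.le hβ.le, rpow_sub hβ, rpow_one]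
    field_simp
  have hr₀α : r₀ ^ (-α) * r₀ ^ 2 = r₀ ^ (2 - α) := by
    rw [← rpow_natCast, ← rpow_add hr₀, Nat.cast_ofNat, neg_add_eq_sub]
  rw [hsq, hsq, ← hpow, neg_mul, show 2 * (1 - α / 2) = 2 - α by ring,
    show 2 * -(α / 2) = -α by ring, ← hr₀α]
  have hα2 : α - 2 ≠ 0 := by linarith
  have hα2' : α / 2 - 1 ≠ 0 := by linarith
  field_simp
  ring

theorem ginibre_mean_interference_general {Ω : Type*} [MeasurableSpace Ω] (P : Measure Ω)
    (α r₀ c β : ℝ) (hα : 2 < α) (hr₀ : 0 < r₀) (hc : 0 < c)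
    (hβ0 : 0 < β)
    (Q h T : ℕ → Ω → ℝ)
    (hQm : ∀ k, Measurable (Q k)) (hhm : ∀ k, Measurable (h k)) (hTm : ∀ k, Measurable (T k))
    (hQ : ∀ k : ℕ, Measure.map (Q k) P = gammaMeasure (k + 2) (c / β))
    (hh : ∀ k : ℕ, Measure.map (h k) P = expMeasure 1)
    (hT : ∀ k : ℕ, Measure.map (T k) P
      = ENNReal.ofReal (1 - β) • Measure.dirac (0 : ℝ) + ENNReal.ofReal β • Measure.dirac 1)
    (hIndep : iIndepFun
      (fun p : ℕ × Fin 3 => ![Q p.1, h p.1, T p.1] p.2) P) :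
    (∀ᵐ ω ∂P, Summable fun k : ℕ =>
      (max (r₀ ^ 2) (Q k ω)) ^ (-(α / 2)) * h k ω * T k ω) ∧
    ∫ ω, (∑' k : ℕ, (max (r₀ ^ 2) (Q k ω)) ^ (-(α / 2)) * h k ω * T k ω) ∂P
      = c * r₀ ^ (2 - α) * (α / (α - 2))
        + β * r₀ ^ (-α) * (Real.exp (-(c / β) * r₀ ^ 2) - 1)
        - c ^ (α / 2) * β ^ (1 - α / 2) * upperGamma (1 - α / 2) ((c / β) * r₀ ^ 2) := by
  set f : ℝ → ℝ := fun t ↦ max (r₀ ^ 2) t ^ (-(α / 2))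
  have hf : Measurable f := by fun_prop
  have hf0 : ∀ t, 0 ≤ f t := fun t ↦ rpow_nonneg ((sq_nonneg r₀).trans (le_max_left _ _)) _
  have hl : 0 < c / β := div_pos hc hβ0
  have hterm : ∀ k, ∫⁻ ω, ENNReal.ofReal (f (Q k ω) * h k ω * T k ω) ∂P
      = ENNReal.ofReal β * ∫⁻ x, ENNReal.ofReal (f x) ∂gammaMeasure (k + 2) (c / β) := by
    intro k
    have hind : iIndepFun ![Q k, h k, T k] P :=
      hIndep.precomp (g := fun j ↦ (k, j)) (Prod.mk_right_injective k)
    rw [← hQ k]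
    exact lintegral_ofReal_comp_mul_mul_of_iIndepFun hf hf0 (hQm k) (hhm k) (hTm k) hind
      (hh k) (hT k)
  have hnonneg : ∀ k, 0 ≤ᵐ[P] fun ω ↦ f (Q k ω) * h k ω * T k ω := fun k ↦ by
    filter_upwards [ae_of_ae_map (p := (0 ≤ ·)) (hhm k).aemeasurable
        (hh k ▸ ae_nonneg_expMeasure 1),
      ae_of_ae_map (p := (0 ≤ ·)) (hTm k).aemeasurable
        (hT k ▸ ae_nonneg_smul_dirac_zero_add_smul_dirac_one _ _)] with ω hω hTω
    exact mul_nonneg (mul_nonneg (hf0 _) hω) hTω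
  obtain ⟨hint, -⟩ := integral_Ioi_max_rpow_mul_one_sub_exp (p := α / 2) (by linarith)
    (by positivity : 0 < r₀ ^ 2) hl
  rw [← mul_integral_Ioi_max_sq_rpow_mul_one_sub_exp hα hr₀ hc hβ0]
  refine ae_summable_and_integral_tsum_eq_of_nonneg (X := fun k ω ↦ f (Q k ω) * h k ω * T k ω)
    (fun k ↦ ((hf.comp (hQm k)).mul (hhm k)).mul (hTm k)) hnonneg
    (mul_nonneg hβ0.le (setIntegral_nonneg measurableSet_Ioi fun t ht ↦ ?_)) ?_
  · exact mul_nonneg (hf0 t) (mul_one_sub_exp_neg_mul_nonneg hl.le (le_of_lt ht))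
  · rw [tsum_congr hterm, ENNReal.tsum_mul_left,
      tsum_lintegral_ofReal_gammaMeasure_nat_add_two hl hf hf0 hint, ENNReal.ofReal_mul hβ0.le]

/-- Mean interference at the typical point of a β-Ginibre wireless network with bounded
power-law path loss `ℓ(r) = (max{r₀,r})^{−α}` and Rayleigh fading: if
`Q_k ~ Gamma(k, rate c/β)`, `h_k ~ Exp(1)` and `T_k ~ Bernoulli(β)` (`k ≥ 2`, encoded as
`k+2` for `k : ℕ`) are mutually independent, then the interference series
`I = Σ_{k≥2} (max{r₀², Q_k})^{−α/2} h_k T_k` converges a.s. and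
`E[I] = c r₀^{2−α} α/(α−2) + β r₀^{−α}(e^{−(c/β)r₀²} − 1)
 − c^{α/2} β^{1−α/2} Γ(1−α/2, (c/β)r₀²)`. -/
theorem ginibre_mean_interference {Ω : Type*} [MeasurableSpace Ω] (P : Measure Ω)
    [IsProbabilityMeasure P] (α r₀ c β : ℝ) (hα : 2 < α) (hr₀ : 0 < r₀) (hc : 0 < c)
    (hβ0 : 0 < β) (hβ1 : β ≤ 1)
    (Q h T : ℕ → Ω → ℝ)
    (hQm : ∀ k, Measurable (Q k)) (hhm : ∀ k, Measurable (h k)) (hTm : ∀ k, Measurable (T k))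
    (hQ : ∀ k : ℕ, Measure.map (Q k) P = gammaMeasure (k + 2) (c / β))
    (hh : ∀ k : ℕ, Measure.map (h k) P = expMeasure 1)
    (hT : ∀ k : ℕ, Measure.map (T k) P
      = ENNReal.ofReal (1 - β) • Measure.dirac (0 : ℝ) + ENNReal.ofReal β • Measure.dirac 1)
    (hIndep : iIndepFun
      (fun p : ℕ × Fin 3 => ![Q p.1, h p.1, T p.1] p.2) P) :
    (∀ᵐ ω ∂P, Summable fun k : ℕ =>
      (max (r₀ ^ 2) (Q k ω)) ^ (-(α / 2)) * h k ω * T k ω) ∧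
    ∫ ω, (∑' k : ℕ, (max (r₀ ^ 2) (Q k ω)) ^ (-(α / 2)) * h k ω * T k ω) ∂P
      = c * r₀ ^ (2 - α) * (α / (α - 2))
        + β * r₀ ^ (-α) * (Real.exp (-(c / β) * r₀ ^ 2) - 1)
        - c ^ (α / 2) * β ^ (1 - α / 2) * upperGamma (1 - α / 2) ((c / β) * r₀ ^ 2) :=
  ginibre_mean_interference_general P α r₀ c β hα hr₀ hc hβ0 Q h T hQm hhm hTm hQ hh hT hIndep
end

section
/- Let α > 2, r₀ > 0 and 0 < β ≤ 1, and for c > 0 define E(c) = c r₀^{2−α}·α/(α−2) + β r₀^{−α}(e^{−(c/β)r₀²} − 1) − c^{α/2} β^{1−α/2} Γ(1 − α/2, (c/β) r₀²), where Γ(a, x) = ∫ₓ^∞ t^{a−1} e^{−t} dt. Then E(c) approaches the affine function a + b·c as c → ∞, where a = −β r₀^{−α} and b = α r₀^{2−α}/(α−2); that is, lim_{c→∞} ( E(c) − (a + b c) ) = 0. In particular, lim_{c→∞} c^{α/2} β^{1−α/2} ∫_{(c/β)r₀²}^∞ t^{−α/2} e^{−t} dt = 0. -/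
/-!
For `s ≤ 0` the factor `t ^ s` is at most `x ^ s` on `(x, ∞)`, so `Γ(s + 1, x) ≤ x ^ s e^{-x}`.
With `s = -α/2` and `x = (c/β) r₀²` the powers of `c` cancel exactly, so the incomplete-gamma term
is squeezed between `0` and `β r₀^{-α} e^{-(c/β) r₀²}`, which tends to `0`. What remains of
`E(c) - (a + b c)` is `β r₀^{-α} e^{-(c/β) r₀²}` minus that term.
-/

open Real Filter Topology Set MeasureTheory

namespace Real

theorem integrableOn_rpow_mul_exp_neg_Ioi (s : ℝ) {x : ℝ} (hx : 0 < x) :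
    IntegrableOn (fun t : ℝ => t ^ s * exp (-t)) (Ioi x) := by
  simp_rw [mul_comm (_ ^ s)]
  refine integrable_of_isBigO_exp_neg one_half_pos ?_ (Gamma_integrand_isLittleO s).isBigO
  exact continuousOn_id.neg.rexp.mul
    (continuousOn_id.rpow_const fun t ht => Or.inl (hx.trans_le ht).ne')

theorem setIntegral_rpow_mul_exp_neg_Ioi_nonneg (s : ℝ) {x : ℝ} (hx : 0 ≤ x) :
    0 ≤ ∫ t in Ioi x, t ^ s * exp (-t) :=
  setIntegral_nonneg measurableSet_Ioi fun _ ht =>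
    mul_nonneg (rpow_nonneg (hx.trans (le_of_lt ht)) s) (exp_pos _).le

theorem setIntegral_rpow_mul_exp_neg_Ioi_le {s x : ℝ} (hs : s ≤ 0) (hx : 0 < x) :
    ∫ t in Ioi x, t ^ s * exp (-t) ≤ x ^ s * exp (-x) :=
  calc ∫ t in Ioi x, t ^ s * exp (-t) ≤ ∫ t in Ioi x, x ^ s * exp (-t) :=
        setIntegral_mono_on (integrableOn_rpow_mul_exp_neg_Ioi s hx)
          ((integrableOn_exp_neg_Ioi x).const_mul _) measurableSet_Ioi fun _ ht =>
          mul_le_mul_of_nonneg_right (rpow_le_rpow_of_nonpos hx (le_of_lt ht) hs) (exp_pos _).le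
    _ = x ^ s * exp (-x) := by rw [integral_const_mul, integral_exp_neg_Ioi]

end Real

section GinibreInterference

variable {α β r₀ : ℝ}

theorem rpow_mul_rpow_mul_div_mul_sq_rpow_neg {c : ℝ} (hc : 0 < c) (hβ : 0 < β) (hr₀ : 0 < r₀) :
    c ^ (α / 2) * β ^ (1 - α / 2) * (c / β * r₀ ^ 2) ^ (-(α / 2)) = β * r₀ ^ (-α) := by
  rw [mul_rpow (by positivity) (by positivity), div_rpow hc.le hβ.le, ← rpow_natCast,
    ← rpow_mul hr₀.le, rpow_neg hc.le, rpow_neg hβ.le, rpow_sub hβ, rpow_one]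
  field_simp
  ring_nf

theorem rpow_mul_setIntegral_rpow_mul_exp_neg_le {c : ℝ} (hα : 0 ≤ α) (hc : 0 < c)
    (hβ : 0 < β) (hr₀ : 0 < r₀) :
    c ^ (α / 2) * β ^ (1 - α / 2) * ∫ t in Ioi (c / β * r₀ ^ 2), t ^ (-(α / 2)) * exp (-t)
      ≤ β * r₀ ^ (-α) * exp (-(c / β * r₀ ^ 2)) :=
  calc _ ≤ c ^ (α / 2) * β ^ (1 - α / 2) *
          ((c / β * r₀ ^ 2) ^ (-(α / 2)) * exp (-(c / β * r₀ ^ 2))) := by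
        gcongr
        exact setIntegral_rpow_mul_exp_neg_Ioi_le (by linarith) (by positivity)
    _ = β * r₀ ^ (-α) * exp (-(c / β * r₀ ^ 2)) := by
        rw [← mul_assoc, rpow_mul_rpow_mul_div_mul_sq_rpow_neg hc hβ hr₀]

theorem tendsto_mul_exp_neg_div_mul_sq_atTop (K : ℝ) (hβ : 0 < β) (hr₀ : r₀ ≠ 0) :
    Tendsto (fun c : ℝ => K * exp (-(c / β * r₀ ^ 2))) atTop (𝓝 0) := by
  have hx : Tendsto (fun c : ℝ => c / β * r₀ ^ 2) atTop atTop :=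
    (tendsto_id.atTop_div_const hβ).atTop_mul_const (by positivity)
  simpa using (tendsto_exp_neg_atTop_nhds_zero.comp hx).const_mul K

theorem tendsto_rpow_mul_setIntegral_rpow_mul_exp_neg_atTop (hα : 0 ≤ α) (hβ : 0 < β)
    (hr₀ : 0 < r₀) :
    Tendsto (fun c : ℝ =>
        c ^ (α / 2) * β ^ (1 - α / 2) * ∫ t in Ioi (c / β * r₀ ^ 2), t ^ (-(α / 2)) * exp (-t))
      atTop (𝓝 0) := by
  refine tendsto_of_tendsto_of_tendsto_of_le_of_le' tendsto_const_nhds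
    (tendsto_mul_exp_neg_div_mul_sq_atTop (β * r₀ ^ (-α)) hβ hr₀.ne') ?_ ?_
  all_goals filter_upwards [eventually_gt_atTop 0] with c hc
  · exact mul_nonneg (by positivity) (setIntegral_rpow_mul_exp_neg_Ioi_nonneg _ (by positivity))
  · exact rpow_mul_setIntegral_rpow_mul_exp_neg_le hα hc hβ hr₀

end GinibreInterference

theorem ginibre_mean_interference_affine_asymptotics_general (α r₀ β : ℝ) (hα : 2 < α) (hr₀ : 0 < r₀)
    (hβ0 : 0 < β) :
    Tendsto (fun c : ℝ =>
        (c * r₀ ^ (2 - α) * (α / (α - 2))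
            + β * r₀ ^ (-α) * (Real.exp (-(c / β) * r₀ ^ 2) - 1)
            - c ^ (α / 2) * β ^ (1 - α / 2) *
              ∫ t in Ioi ((c / β) * r₀ ^ 2), t ^ ((1 - α / 2) - 1) * Real.exp (-t))
          - (-(β * r₀ ^ (-α)) + (α * r₀ ^ (2 - α) / (α - 2)) * c))
      atTop (𝓝 0) ∧
    Tendsto (fun c : ℝ =>
        c ^ (α / 2) * β ^ (1 - α / 2) *
          ∫ t in Ioi ((c / β) * r₀ ^ 2), t ^ (-(α / 2)) * Real.exp (-t))
      atTop (𝓝 0) := by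
  have hgamma := tendsto_rpow_mul_setIntegral_rpow_mul_exp_neg_atTop
    (zero_le_two.trans hα.le) hβ0 hr₀
  refine ⟨?_, hgamma⟩
  have hdiff := (tendsto_mul_exp_neg_div_mul_sq_atTop (β * r₀ ^ (-α)) hβ0 hr₀.ne').sub hgamma
  rw [sub_zero] at hdiff
  refine hdiff.congr fun c => ?_
  simp only [show (1 - α / 2) - 1 = -(α / 2) by ring, neg_mul]
  ring

/-- The mean interference
`E(c) = c r₀^{2−α} α/(α−2) + β r₀^{−α}(e^{−(c/β)r₀²} − 1) − c^{α/2} β^{1−α/2} Γ(1−α/2, (c/β)r₀²)`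
approaches the affine function `a + b c` with `a = −β r₀^{−α}`, `b = α r₀^{2−α}/(α−2)` as
`c → ∞`; in particular the incomplete-gamma term vanishes in the limit. -/
theorem ginibre_mean_interference_affine_asymptotics (α r₀ β : ℝ) (hα : 2 < α) (hr₀ : 0 < r₀)
    (hβ0 : 0 < β) (hβ1 : β ≤ 1) :
    Tendsto (fun c : ℝ =>
        (c * r₀ ^ (2 - α) * (α / (α - 2))
            + β * r₀ ^ (-α) * (Real.exp (-(c / β) * r₀ ^ 2) - 1)
            - c ^ (α / 2) * β ^ (1 - α / 2) *
              ∫ t in Ioi ((c / β) * r₀ ^ 2), t ^ ((1 - α / 2) - 1) * Real.exp (-t))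
          - (-(β * r₀ ^ (-α)) + (α * r₀ ^ (2 - α) / (α - 2)) * c))
      atTop (𝓝 0) ∧
    Tendsto (fun c : ℝ =>
        c ^ (α / 2) * β ^ (1 - α / 2) *
          ∫ t in Ioi ((c / β) * r₀ ^ 2), t ^ (-(α / 2)) * Real.exp (-t))
      atTop (𝓝 0) :=
  ginibre_mean_interference_affine_asymptotics_general α r₀ β hα hr₀ hβ0
end

section
/- Let α > 2, r₀ > 0, c > 0 and 0 < β ≤ 1. Then (c/π) ∫₀^∞ (max{r₀, r})^{−α} · 2π r · (1 − e^{−(c/β) r²}) dr = c r₀^{2−α}·α/(α−2) + β r₀^{−α}(e^{−(c/β)r₀²} − 1) − c^{α/2} β^{1−α/2} Γ(1 − α/2, (c/β) r₀²), where Γ(a, x) = ∫ₓ^∞ t^{a−1} e^{−t} dt is the upper incomplete gamma function. -/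
/-!
Split the radial integral at `r₀`. On `(0, r₀]` the path-loss factor is the constant `r₀^{-α}`
and `2r (1 - e^{-kr²})` has the antiderivative `r² + e^{-kr²}/k`. On `(r₀, ∞)` the integrand is
`2π (r^{1-α} - r^{1-α} e^{-kr²})`: the first term integrates to `r₀^{2-α}/(α-2)` because `α > 2`,
and the substitution `t = k r²` turns the second into `k^{α/2-1}/2 · Γ(1 - α/2, k r₀²)`.
With `k = c/β` the prefactor `c/π` then produces the stated coefficients.
-/

open Real MeasureTheory Set

theorem strictMonoOn_const_mul_sq {k : ℝ} (hk : 0 < k) :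
    StrictMonoOn (fun r : ℝ => k * r ^ 2) (Ici 0) := fun _ hx _ _ hxy =>
  mul_lt_mul_of_pos_left (pow_lt_pow_left₀ hxy hx two_ne_zero) hk

theorem image_const_mul_sq_Ioi {k a : ℝ} (hk : 0 < k) (ha : 0 ≤ a) :
    (fun r : ℝ => k * r ^ 2) '' Ioi a = Ioi (k * a ^ 2) :=
  (continuous_const.mul (continuous_pow 2)).continuousOn.image_Ioi_of_strictMonoOn
    ((strictMonoOn_const_mul_sq hk).mono (Ici_subset_Ici.mpr ha))
    ((Filter.tendsto_pow_atTop two_ne_zero).const_mul_atTop hk)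

theorem integral_Ioi_comp_const_mul_sq {E : Type*} [NormedAddCommGroup E] [NormedSpace ℝ E]
    {k a : ℝ} (hk : 0 < k) (ha : 0 ≤ a) (g : ℝ → E) :
    ∫ r in Ioi a, (2 * k * r) • g (k * r ^ 2) = ∫ t in Ioi (k * a ^ 2), g t := by
  have hderiv : ∀ r ∈ Ioi a, HasDerivWithinAt (fun r : ℝ => k * r ^ 2) (2 * k * r) (Ioi a) r :=
    fun r _ => ((hasDerivAt_pow 2 r).const_mul k).hasDerivWithinAt.congr_deriv (by ring)
  have hinj : InjOn (fun r : ℝ => k * r ^ 2) (Ioi a) :=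
    (strictMonoOn_const_mul_sq hk).injOn.mono fun r hr => ha.trans (le_of_lt hr)
  rw [← image_const_mul_sq_Ioi hk ha,
    integral_image_eq_integral_abs_deriv_smul measurableSet_Ioi hderiv hinj]
  refine setIntegral_congr_fun measurableSet_Ioi fun r hr => ?_
  rw [abs_of_nonneg (by have := ha.trans hr.le; positivity)]

noncomputable def upperIncompleteGamma (s x : ℝ) : ℝ := ∫ t in Ioi x, t ^ (s - 1) * exp (-t)

theorem integral_Ioi_rpow_mul_exp_neg_mul_sq {k a : ℝ} (hk : 0 < k) (ha : 0 < a) (s : ℝ) :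
    ∫ r in Ioi a, r ^ (2 * s - 1) * exp (-k * r ^ 2)
      = k ^ (-s) / 2 * upperIncompleteGamma s (k * a ^ 2) := by
  have hpow : ∀ r : ℝ, 0 < r →
      (2 * k * r) • ((k * r ^ 2) ^ (s - 1) * exp (-(k * r ^ 2)))
        = 2 * k ^ s * (r ^ (2 * s - 1) * exp (-k * r ^ 2)) := fun r hr => by
    rw [smul_eq_mul, mul_rpow hk.le (by positivity), ← rpow_natCast, ← rpow_mul hr.le,
      show 2 * s - 1 = (2 : ℕ) * (s - 1) + 1 by push_cast; ring, rpow_add_one hr.ne',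
      show k ^ s = k ^ (s - 1 + 1) by ring_nf, rpow_add_one hk.ne', neg_mul]
    ring
  rw [upperIncompleteGamma, ← integral_Ioi_comp_const_mul_sq hk ha.le,
    setIntegral_congr_fun measurableSet_Ioi fun r hr => hpow r (ha.trans hr),
    integral_const_mul, rpow_neg hk.le]
  field_simp

theorem integral_two_mul_one_sub_exp_neg_mul_sq {k : ℝ} (hk : k ≠ 0) (a : ℝ) :
    ∫ r in (0)..a, 2 * r * (1 - exp (-k * r ^ 2)) = a ^ 2 + (exp (-k * a ^ 2) - 1) / k := by
  have hderiv : ∀ r ∈ uIcc 0 a, HasDerivAt (fun r : ℝ => r ^ 2 + exp (-k * r ^ 2) / k)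
      (2 * r * (1 - exp (-k * r ^ 2))) r := fun r _ => by
    have hsq : HasDerivAt (fun r : ℝ => r ^ 2) (2 * r) r := by
      simpa using hasDerivAt_pow 2 r
    refine (hsq.add ((hsq.const_mul (-k)).exp.div_const k)).congr_deriv ?_
    field_simp
    ring
  rw [intervalIntegral.integral_eq_sub_of_hasDerivAt hderiv
    ((by fun_prop : Continuous fun r : ℝ => 2 * r * (1 - exp (-k * r ^ 2))).intervalIntegrable _ _)]
  simp only [ne_eq, OfNat.ofNat_ne_zero, not_false_eq_true, zero_pow, mul_zero, exp_zero]
  ring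

theorem integrableOn_Ioi_rpow_mul_exp_neg_mul_sq {p k a : ℝ} (hp : p < -1) (hk : 0 ≤ k)
    (ha : 0 < a) : IntegrableOn (fun r : ℝ => r ^ p * exp (-k * r ^ 2)) (Ioi a) := by
  refine (integrableOn_Ioi_rpow_of_lt hp ha).mono' ?_ ?_
  · exact ContinuousOn.aestronglyMeasurable (fun r hr =>
      ((continuousAt_id.rpow_const (Or.inl (ha.trans hr).ne')).mul
        (by fun_prop)).continuousWithinAt) measurableSet_Ioi
  · refine ae_restrict_of_forall_mem measurableSet_Ioi fun r hr => ?_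
    have hrp : 0 ≤ r ^ p := rpow_nonneg (ha.trans hr).le p
    rw [norm_of_nonneg (by positivity)]
    exact mul_le_of_le_one_right hrp (exp_le_one_iff.mpr (by nlinarith))

theorem integrableOn_Ioi_rpow_mul_one_sub_exp_neg_mul_sq {p k a : ℝ} (hp : p < -1)
    (hk : 0 ≤ k) (ha : 0 < a) :
    IntegrableOn (fun r : ℝ => r ^ p * (1 - exp (-k * r ^ 2))) (Ioi a) := by
  simp_rw [mul_one_sub]
  exact (integrableOn_Ioi_rpow_of_lt hp ha).sub (integrableOn_Ioi_rpow_mul_exp_neg_mul_sq hp hk ha)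

theorem integral_Ioi_rpow_mul_one_sub_exp_neg_mul_sq {α k a : ℝ} (hα : 2 < α) (hk : 0 < k)
    (ha : 0 < a) :
    ∫ r in Ioi a, r ^ (1 - α) * (1 - exp (-k * r ^ 2))
      = a ^ (2 - α) / (α - 2)
        - k ^ (α / 2 - 1) / 2 * upperIncompleteGamma (1 - α / 2) (k * a ^ 2) := by
  have hp : 1 - α < -1 := by linarith
  have hgamma := integral_Ioi_rpow_mul_exp_neg_mul_sq hk ha (1 - α / 2)
  rw [show 2 * (1 - α / 2) - 1 = 1 - α by ring, neg_sub] at hgamma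
  simp_rw [mul_one_sub]
  rw [integral_sub (integrableOn_Ioi_rpow_of_lt hp ha)
      (integrableOn_Ioi_rpow_mul_exp_neg_mul_sq hp hk.le ha),
    integral_Ioi_rpow_of_lt hp ha, hgamma, show 1 - α + 1 = 2 - α by ring, neg_div,
    ← div_neg, neg_sub]

theorem integral_Ioi_max_rpow_mul_one_sub_exp_neg_mul_sq {α a k : ℝ} (hα : 2 < α) (ha : 0 < a)
    (hk : 0 < k) :
    ∫ r in Ioi 0, (max a r) ^ (-α) * (2 * π * r) * (1 - exp (-k * r ^ 2))
      = π * a ^ (2 - α) * (α / (α - 2)) + π / k * a ^ (-α) * (exp (-k * a ^ 2) - 1)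
        - π * k ^ (α / 2 - 1) * upperIncompleteGamma (1 - α / 2) (k * a ^ 2) := by
  set f := fun r : ℝ => (max a r) ^ (-α) * (2 * π * r) * (1 - exp (-k * r ^ 2))
  have hnear : EqOn f (fun r => π * a ^ (-α) * (2 * r * (1 - exp (-k * r ^ 2)))) (Ioc 0 a) :=
    fun r hr => by simp only [f, max_eq_left hr.2]; ring
  have hfar : EqOn f (fun r => 2 * π * (r ^ (1 - α) * (1 - exp (-k * r ^ 2)))) (Ioi a) :=
    fun r hr => by
      simp only [f, max_eq_right hr.out.le, show 1 - α = -α + 1 by ring,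
        rpow_add_one (ha.trans hr).ne']
      ring
  have hint_near : IntegrableOn f (Ioc 0 a) :=
    (Continuous.integrableOn_Ioc (by fun_prop)).congr_fun hnear.symm measurableSet_Ioc
  have hint_far : IntegrableOn f (Ioi a) :=
    IntegrableOn.congr_fun ((integrableOn_Ioi_rpow_mul_one_sub_exp_neg_mul_sq (p := 1 - α)
      (by linarith) hk.le ha).const_mul (2 * π)) hfar.symm measurableSet_Ioi
  rw [← Ioc_union_Ioi_eq_Ioi ha.le,
    setIntegral_union Ioc_disjoint_Ioi_same measurableSet_Ioi hint_near hint_far,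
    setIntegral_congr_fun measurableSet_Ioc hnear, setIntegral_congr_fun measurableSet_Ioi hfar,
    integral_const_mul, integral_const_mul, ← intervalIntegral.integral_of_le ha.le,
    integral_two_mul_one_sub_exp_neg_mul_sq hk.ne',
    integral_Ioi_rpow_mul_one_sub_exp_neg_mul_sq hα hk ha]
  have hpow : a ^ (-α) * a ^ 2 = a ^ (2 - α) := by
    rw [← rpow_natCast, ← rpow_add ha]; congr 1; push_cast; ring
  have hfrac : α / (α - 2) = 1 + 2 / (α - 2) := by
    have : α - 2 ≠ 0 := by linarith
    field_simp; ring
  rw [hfrac]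
  linear_combination π * hpow

theorem ginibre_mean_interference_second_moment_general (α r₀ c β : ℝ) (hα : 2 < α) (hr₀ : 0 < r₀)
    (hc : 0 < c) (hβ0 : 0 < β) :
    (c / π) * ∫ r in Ioi (0 : ℝ),
        (max r₀ r) ^ (-α) * (2 * π * r) * (1 - Real.exp (-(c / β) * r ^ 2))
      = c * r₀ ^ (2 - α) * (α / (α - 2))
        + β * r₀ ^ (-α) * (Real.exp (-(c / β) * r₀ ^ 2) - 1)
        - c ^ (α / 2) * β ^ (1 - α / 2) *
          ∫ t in Ioi ((c / β) * r₀ ^ 2), t ^ ((1 - α / 2) - 1) * Real.exp (-t) := by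
  have hcoef : c * (c / β) ^ (α / 2 - 1) = c ^ (α / 2) * β ^ (1 - α / 2) := by
    have hc_pow : c ^ (α / 2) = c ^ (α / 2 - 1) * c := by rw [← rpow_add_one hc.ne']; ring_nf
    rw [div_rpow hc.le hβ0.le, show 1 - α / 2 = -(α / 2 - 1) by ring, rpow_neg hβ0.le, hc_pow]
    ring
  rw [integral_Ioi_max_rpow_mul_one_sub_exp_neg_mul_sq hα hr₀ (div_pos hc hβ0), ← hcoef]
  unfold upperIncompleteGamma
  field_simp

/-- Mean interference of the β-Ginibre wireless network of intensity `c/π` via the reduced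
second moment measure:
`(c/π) ∫₀^∞ (max{r₀,r})^{−α} 2πr (1 − e^{−(c/β)r²}) dr
  = c r₀^{2−α} α/(α−2) + β r₀^{−α}(e^{−(c/β)r₀²} − 1) − c^{α/2} β^{1−α/2} Γ(1−α/2, (c/β)r₀²)`,
where `Γ(a,x) = ∫ₓ^∞ t^{a−1} e^{−t} dt` is the upper incomplete gamma function. -/
theorem ginibre_mean_interference_second_moment (α r₀ c β : ℝ) (hα : 2 < α) (hr₀ : 0 < r₀)
    (hc : 0 < c) (hβ0 : 0 < β) (hβ1 : β ≤ 1) :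
    (c / π) * ∫ r in Ioi (0 : ℝ),
        (max r₀ r) ^ (-α) * (2 * π * r) * (1 - Real.exp (-(c / β) * r ^ 2))
      = c * r₀ ^ (2 - α) * (α / (α - 2))
        + β * r₀ ^ (-α) * (Real.exp (-(c / β) * r₀ ^ 2) - 1)
        - c ^ (α / 2) * β ^ (1 - α / 2) *
          ∫ t in Ioi ((c / β) * r₀ ^ 2), t ^ ((1 - α / 2) - 1) * Real.exp (-t) :=
  ginibre_mean_interference_second_moment_general α r₀ c β hα hr₀ hc hβ0
end
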